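/- arXiv:math/9804119 — 3 statements merged into one kernel-verified Lean document; each statement's English description precedes it below -/
import Mathlib

section
/- Given m ≥ 2 and a vector (n₁,...,n_m) of nonnegative integers with n = n₁+...+n_m, there exists an m-ary cactus with vertex-color distribution (n₁,...,n_m) if and only if (1) p := (n-1)/(m-1) is a nonnegative integer, and (2) if p ≥ 1 then n_i ≤ p for every i. -/
/-! Combinatorial encoding of plane m-ary cacti.

A *planted* m-ary cactus (species 𝒜 = X·L(𝒜^{m-1})) is a root vertex carrying a
linear (plane) sequence of `t` polygons, each polygon carrying `m-1` further
planted cacti at its other vertices (slot `k` is the vertex whose color is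
`k+1` further, cyclically counterclockwise, than the root's color).  Colors of
all vertices are determined by the color of the root.  The label type `α`
allows labelled vertices (`α := Unit` for unlabelled cacti). -/

inductive Planted (m : ℕ) (α : Type) : Type where
  | node : α → (t : ℕ) → (Fin t → Fin (m - 1) → Planted m α) → Planted m α

/-- the color `k+1` steps counterclockwise after color `i` (within a polygon). -/
def nextCol {m : ℕ} (i : Fin m) (k : Fin (m - 1)) : Fin m :=
  ⟨(i.val + 1 + k.val) % m, Nat.mod_lt _ i.pos⟩

namespace Planted

variable {m : ℕ} {α : Type}

/-- number of vertices -/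
def nv : Planted m α → ℕ
  | .node _ t f => 1 + ∑ s : Fin t, ∑ k : Fin (m - 1), (f s k).nv

/-- number of polygons -/
def np : Planted m α → ℕ
  | .node _ t f => t + ∑ s : Fin t, ∑ k : Fin (m - 1), (f s k).np

/-- number of vertices of color `j`, when the root has color `i`. -/
def ncol : Fin m → Planted m α → Fin m → ℕ
  | i, .node _ t f, j =>
      (if j = i then 1 else 0) +
        ∑ s : Fin t, ∑ k : Fin (m - 1), ncol (nextCol i k) (f s k) j

/-- number of vertices of color `j` and degree `d` (degree = number of incident
polygons), when the root has color `i` and `r` additional polygons (from above)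
are incident to the root. -/
def ndeg : ℕ → Fin m → Planted m α → Fin m → ℕ → ℕ
  | r, i, .node _ t f, j, d =>
      (if j = i ∧ d = t + r then 1 else 0) +
        ∑ s : Fin t, ∑ k : Fin (m - 1), ndeg 1 (nextCol i k) (f s k) j d

/-- multiset of all vertex labels -/
def labels : Planted m α → Multiset α
  | .node a t f => a ::ₘ ∑ s : Fin t, ∑ k : Fin (m - 1), (f s k).labels

/-- multiset of the labels of the vertices of color `j`, root colored `i`. -/
def clabels : Fin m → Planted m α → Fin m → Multiset α
  | i, .node a t f, j =>
      (if j = i then {a} else 0) +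
        ∑ s : Fin t, ∑ k : Fin (m - 1), clabels (nextCol i k) (f s k) j

end Planted

/-- A *pointed* plane m-ary cactus: a distinguished vertex (with its label and
color) carrying a sequence of `t` polygons; the plane structure makes this
sequence well defined up to a cyclic rotation (see `rotEquiv`). -/
structure PtdRaw (m : ℕ) (α : Type) where
  lab : α
  col : Fin m
  t : ℕ
  polys : Fin t → Fin (m - 1) → Planted m α

namespace PtdRaw

variable {m : ℕ} {α : Type}

def nv (x : PtdRaw m α) : ℕ :=
  1 + ∑ s : Fin x.t, ∑ k : Fin (m - 1), (x.polys s k).nv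

def np (x : PtdRaw m α) : ℕ :=
  x.t + ∑ s : Fin x.t, ∑ k : Fin (m - 1), (x.polys s k).np

def ncol (x : PtdRaw m α) (j : Fin m) : ℕ :=
  (if j = x.col then 1 else 0) +
    ∑ s : Fin x.t, ∑ k : Fin (m - 1), Planted.ncol (nextCol x.col k) (x.polys s k) j

def ndeg (x : PtdRaw m α) (j : Fin m) (d : ℕ) : ℕ :=
  (if j = x.col ∧ d = x.t then 1 else 0) +
    ∑ s : Fin x.t, ∑ k : Fin (m - 1), Planted.ndeg 1 (nextCol x.col k) (x.polys s k) j d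

def labels (x : PtdRaw m α) : Multiset α :=
  x.lab ::ₘ ∑ s : Fin x.t, ∑ k : Fin (m - 1), (x.polys s k).labels

def clabels (x : PtdRaw m α) (j : Fin m) : Multiset α :=
  (if j = x.col then {x.lab} else 0) +
    ∑ s : Fin x.t, ∑ k : Fin (m - 1), Planted.clabels (nextCol x.col k) (x.polys s k) j

/-- cyclic shift of an index of `Fin t` by `r`. -/
def shiftIdx {t : ℕ} (r : ℕ) (s : Fin t) : Fin t :=
  ⟨(s.val + r) % t, Nat.mod_lt _ s.pos⟩

/-- Two raw pointed cacti represent the same (unlabelled plane) pointed cactus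
iff the sequences of polygons at the point differ by a cyclic rotation. -/
def rotEquiv (x y : PtdRaw m α) : Prop :=
  x.lab = y.lab ∧ x.col = y.col ∧
    ∃ (h : x.t = y.t) (r : ℕ),
      ∀ s : Fin x.t, y.polys (Fin.cast h (shiftIdx r s)) = x.polys s

/-- Same, but allowing an arbitrary permutation of the polygons at the point
(used for *free*, i.e. non-plane, cacti). -/
def permEquiv (x y : PtdRaw m α) : Prop :=
  x.lab = y.lab ∧ x.col = y.col ∧
    ∃ (h : x.t = y.t) (σ : Fin x.t ≃ Fin x.t),
      ∀ s : Fin x.t, y.polys (Fin.cast h (σ s)) = x.polys s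

/-- the planted cactus obtained from a pointed cactus by removing polygon `s`,
keeping the (linear, starting right after `s`) sequence of remaining polygons. -/
def restOf (x : PtdRaw m α) (s : Fin x.t) : Planted m α :=
  .node x.lab (x.t - 1)
    (fun r k' => x.polys ⟨(s.val + 1 + r.val) % x.t, Nat.mod_lt _ s.pos⟩ k')

/-- slot (counterclockwise distance minus one) of color `j` in a polygon,
relative to a base vertex of color `i`; equals `m - 1` iff `j = i`. -/
def slotVal {m : ℕ} (i j : Fin m) : ℕ := (j.val + m - i.val - 1) % m

def mkFin {n : ℕ} (v : ℕ) (k : Fin n) : Fin n := ⟨v % n, Nat.mod_lt _ k.pos⟩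

/-- Move the point across polygon `s`, to the vertex of that polygon lying in
slot `k` (i.e. of color `nextCol x.col k`).  This is the elementary step
generating the identification of all pointings of the same plane cactus. -/
def repointAt (x : PtdRaw m α) (s : Fin x.t) (k : Fin (m - 1)) : PtdRaw m α :=
  match x.polys s k with
  | .node a u g =>
    let j : Fin m := nextCol x.col k
    let f' : Fin (m - 1) → Planted m α := fun k' =>
      if nextCol j k' = x.col then x.restOf s
      else x.polys s (mkFin (slotVal x.col (nextCol j k')) k')
    { lab := a, col := j, t := u + 1,
      polys := fun i' =>
        if h : i'.val < u then g ⟨i'.val, h⟩ else f' }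

def repointStep (x y : PtdRaw m α) : Prop :=
  ∃ (s : Fin x.t) (k : Fin (m - 1)), y = x.repointAt s k

/-- Shift all colors by one (the point's color determines all colors).  Used to
identify colored cacti representing the same *uncolored* plane cactus. -/
def colShiftStep (x y : PtdRaw m α) : Prop :=
  y = { x with col := ⟨(x.col.val + 1) % m, Nat.mod_lt _ x.col.pos⟩ }

/-- Two raw pointed cacti represent the same plane m-ary cactus iff they are
related by a chain of rotations at the point and elementary repointing moves;
`Quot` below takes the equivalence closure. -/
def cactusRel (x y : PtdRaw m α) : Prop := rotEquiv x y ∨ repointStep x y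

/-- identification giving *uncolored* plane m-gonal cacti. -/
def planeRel (x y : PtdRaw m α) : Prop :=
  rotEquiv x y ∨ repointStep x y ∨ colShiftStep x y

/-- identification giving *free* (non-plane) m-ary cacti. -/
def freeRel (x y : PtdRaw m α) : Prop := permEquiv x y ∨ repointStep x y

/-- order of the group of rotations at the point fixing the pointed cactus;
for the vertex at the center of the cactus this is the order of the
(color-preserving, orientation-preserving) automorphism group of the cactus,
and at any other vertex it equals 1. -/
noncomputable def rotAut (x : PtdRaw m α) : ℕ :=
  max 1 (Nat.card {r : Fin x.t // ∀ s : Fin x.t, x.polys (shiftIdx r.val s) = x.polys s})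

end PtdRaw

/-- The order of the automorphism group of a cactus (given as an equivalence
class of pointed cacti satisfying an invariant property `P`): the largest
rotational symmetry order among all its pointings. -/
noncomputable def autOrder {m : ℕ} {α : Type} {P : PtdRaw m α → Prop}
    (κ : Quot (fun a b : {x : PtdRaw m α // P x} => PtdRaw.cactusRel a.1 b.1)) : ℕ :=
  sSup {v : ℕ | ∃ x, Quot.mk _ x = κ ∧ PtdRaw.rotAut x.1 = v}

section CactusAux

variable {m : ℕ}

private lemma mod_two_lt {a b : ℕ} (h : a < 2*b) : a % b = if a < b then a else a - b := by
  split
  · exact Nat.mod_eq_of_lt ‹_›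
  · rw [Nat.mod_eq_sub_mod (by omega), Nat.mod_eq_of_lt (by omega)]

private lemma nextCol_val (i : Fin m) (k : Fin (m-1)) :
    (nextCol i k).val =
      if i.val + 1 + k.val < m then i.val + 1 + k.val else i.val + 1 + k.val - m := by
  have hk := k.isLt; have hi := i.isLt
  exact mod_two_lt (by omega)

private lemma nextCol_ne (i : Fin m) (k : Fin (m-1)) : nextCol i k ≠ i := by
  have hk := k.isLt; have hi := i.isLt
  intro h
  have h2 := congrArg Fin.val h
  rw [nextCol_val] at h2
  split at h2 <;> omega

private lemma nextCol_injective (i : Fin m) :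
    Function.Injective (fun k : Fin (m-1) => nextCol i k) := by
  intro k1 k2 h
  have h2 := congrArg Fin.val h
  simp only [nextCol_val] at h2
  have e1 := k1.isLt; have e2 := k2.isLt; have hi := i.isLt
  apply Fin.ext
  split at h2 <;> split at h2 <;> omega

private lemma sum_nextCol (hm : 2 ≤ m) (i : Fin m) (g : Fin m → ℕ) :
    (∑ k : Fin (m-1), g (nextCol i k)) + g i = ∑ c, g c := by
  classical
  have himg : (Finset.univ.image fun k : Fin (m-1) => nextCol i k) = Finset.univ.erase i := by
    apply Finset.eq_of_subset_of_card_le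
    · intro c hc
      simp only [Finset.mem_image, Finset.mem_univ, true_and] at hc
      obtain ⟨k, rfl⟩ := hc
      exact Finset.mem_erase.2 ⟨nextCol_ne i k, Finset.mem_univ _⟩
    · rw [Finset.card_erase_of_mem (Finset.mem_univ i),
        Finset.card_image_of_injective _ (nextCol_injective i)]
      simp
  calc (∑ k : Fin (m-1), g (nextCol i k)) + g i
      = (∑ c ∈ Finset.univ.image (fun k : Fin (m-1) => nextCol i k), g c) + g i := by
        rw [Finset.sum_image (fun a _ b _ h => nextCol_injective i h)]
    _ = (∑ c ∈ Finset.univ.erase i, g c) + g i := by rw [himg]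
    _ = ∑ c, g c := Finset.sum_erase_add _ _ (Finset.mem_univ i)

private lemma sum_ind (hm : 2 ≤ m) (i j : Fin m) :
    (∑ k : Fin (m-1), if j = nextCol i k then (1:ℕ) else 0) = if j = i then 0 else 1 := by
  have h := sum_nextCol hm i (fun c => if j = c then (1:ℕ) else 0)
  rw [Finset.sum_ite_eq] at h
  simp only [Finset.mem_univ, if_true] at h
  by_cases hji : j = i
  · subst hji
    rw [if_pos rfl]
    exact Finset.sum_eq_zero fun k _ => if_neg fun hc => nextCol_ne j k hc.symm
  · rw [if_neg hji] at h ⊢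
    omega

end CactusAux

section CactusAux2

variable {m : ℕ}

private lemma planted_nv (hm : 2 ≤ m) (x : Planted m Unit) :
    x.nv = (m-1) * x.np + 1 := by
  induction x with
  | node a t f ih =>
    simp only [Planted.nv, Planted.np]
    have h1 : ∀ s : Fin t, ∑ k : Fin (m-1), (f s k).nv
        = (m-1) * (∑ k : Fin (m-1), (f s k).np) + (m-1) := by
      intro s
      calc ∑ k : Fin (m-1), (f s k).nv
          = ∑ k : Fin (m-1), ((m-1) * (f s k).np + 1) :=
            Finset.sum_congr rfl fun k _ => ih s k
        _ = (m-1) * (∑ k : Fin (m-1), (f s k).np) + (m-1) := by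
            rw [Finset.sum_add_distrib, ← Finset.mul_sum]
            simp
    rw [Finset.sum_congr rfl fun s (_ : s ∈ Finset.univ) => h1 s,
      Finset.sum_add_distrib, Finset.sum_const, ← Finset.mul_sum]
    simp only [Finset.card_univ, Fintype.card_fin, smul_eq_mul]
    ring

private lemma planted_sum_ncol (hm : 2 ≤ m) (x : Planted m Unit) :
    ∀ i : Fin m, ∑ j, Planted.ncol i x j = x.nv := by
  induction x with
  | node a t f ih =>
    intro i
    simp only [Planted.ncol, Planted.nv]
    rw [Finset.sum_add_distrib]
    congr 1
    · rw [Finset.sum_ite_eq']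
      simp
    · rw [Finset.sum_comm]
      refine Finset.sum_congr rfl fun s _ => ?_
      rw [Finset.sum_comm]
      exact Finset.sum_congr rfl fun k _ => ih s k _

private lemma hb2_lemma (hm : 2 ≤ m) (i j : Fin m) (t : ℕ)
    (f : Fin t → Fin (m-1) → Planted m Unit)
    (hrec : ∀ s k, Planted.ncol (nextCol i k) (f s k) j
      ≤ (f s k).np + (if j = nextCol i k then 1 else 0)) :
    ∑ s : Fin t, ∑ k : Fin (m-1), Planted.ncol (nextCol i k) (f s k) j
      ≤ (∑ s : Fin t, ∑ k : Fin (m-1), (f s k).np) + t * (if j = i then 0 else 1) := by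
  have hb : ∀ s : Fin t, ∑ k : Fin (m-1), Planted.ncol (nextCol i k) (f s k) j
      ≤ (∑ k : Fin (m-1), (f s k).np) + (if j = i then 0 else 1) := by
    intro s
    calc ∑ k : Fin (m-1), Planted.ncol (nextCol i k) (f s k) j
        ≤ ∑ k : Fin (m-1), ((f s k).np + (if j = nextCol i k then 1 else 0)) :=
          Finset.sum_le_sum fun k _ => hrec s k
      _ = (∑ k : Fin (m-1), (f s k).np) + (if j = i then 0 else 1) := by
          rw [Finset.sum_add_distrib, sum_ind hm]
  calc ∑ s : Fin t, ∑ k : Fin (m-1), Planted.ncol (nextCol i k) (f s k) j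
      ≤ ∑ s : Fin t, ((∑ k : Fin (m-1), (f s k).np) + (if j = i then 0 else 1)) :=
        Finset.sum_le_sum fun s _ => hb s
    _ = _ := by
        rw [Finset.sum_add_distrib, Finset.sum_const, Finset.card_univ,
          Fintype.card_fin, smul_eq_mul]

private lemma planted_ncol_le (hm : 2 ≤ m) (x : Planted m Unit) :
    ∀ i j : Fin m, Planted.ncol i x j ≤ x.np + (if j = i then 1 else 0) := by
  induction x with
  | node a t f ih =>
    intro i j
    simp only [Planted.ncol, Planted.np]
    have h2 := hb2_lemma hm i j t f (fun s k => ih s k _ _)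
    by_cases hji : j = i <;> simp only [hji, if_pos rfl, if_neg, ite_true, ite_false] at h2 ⊢ <;> omega

private lemma ptd_nv (hm : 2 ≤ m) (x : PtdRaw m Unit) : x.nv = (m-1) * x.np + 1 :=
  planted_nv hm (.node x.lab x.t x.polys)

private lemma ptd_sum_ncol (hm : 2 ≤ m) (x : PtdRaw m Unit) :
    ∑ j, x.ncol j = x.nv :=
  planted_sum_ncol hm (.node x.lab x.t x.polys) x.col

private lemma ptd_ncol_le (hm : 2 ≤ m) (x : PtdRaw m Unit) (hp : 1 ≤ x.np) (j : Fin m) :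
    x.ncol j ≤ x.np := by
  obtain ⟨a, i, t, f⟩ := x
  simp only [PtdRaw.ncol, PtdRaw.np] at *
  have ht : 1 ≤ t := by
    rcases Nat.eq_zero_or_pos t with rfl | h
    · simp at hp
    · exact h
  have h2 := hb2_lemma hm i j t f (fun s k => planted_ncol_le hm (f s k) _ _)
  by_cases hji : j = i <;> simp only [hji, if_pos rfl, if_neg, ite_true, ite_false] at h2 ⊢ <;> omega

end CactusAux2

section CactusAux3

variable {m : ℕ}

private def leafP (m : ℕ) : Planted m Unit := .node () 0 (fun s _ => s.elim0)

private lemma ncol_leafP (i j : Fin m) :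
    Planted.ncol i (leafP m) j = if j = i then 1 else 0 := by
  simp [leafP, Planted.ncol]

private def starP (m u : ℕ) : Planted m Unit := .node () u (fun _ _ => leafP m)

private lemma ncol_starP (hm : 2 ≤ m) (i j : Fin m) (u : ℕ) :
    Planted.ncol i (starP m u) j
      = (if j = i then 1 else 0) + u * (if j = i then 0 else 1) := by
  simp only [starP, Planted.ncol, ncol_leafP, Finset.univ_eq_empty, Finset.sum_empty,
    add_zero, sum_ind hm, Finset.sum_const, Finset.card_univ, Fintype.card_fin, smul_eq_mul]

private lemma exists_cactus (hm : 2 ≤ m) (p : ℕ) (hp : 1 ≤ p) (nvec : Fin m → ℕ)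
    (hsum : ∑ i, nvec i = (m-1) * p + 1) (hle : ∀ i, nvec i ≤ p) :
    ∃ x : PtdRaw m Unit, ∀ i, x.ncol i = nvec i := by
  classical
  have hm0 : 0 < m := by omega
  set i0 : Fin m := ⟨0, hm0⟩ with hi0
  have hge : ∀ j, 1 ≤ nvec j := by
    intro j
    by_contra h
    have hj0 : nvec j = 0 := by omega
    have he : ∑ i, nvec i = ∑ i ∈ Finset.univ.erase j, nvec i := by
      rw [← Finset.sum_erase_add _ _ (Finset.mem_univ j), hj0, Nat.add_zero]
    have hbound : ∑ i ∈ Finset.univ.erase j, nvec i ≤ (m-1) * p := by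
      calc ∑ i ∈ Finset.univ.erase j, nvec i ≤ ∑ _i ∈ Finset.univ.erase j, p :=
            Finset.sum_le_sum fun i _ => hle i
        _ = (m-1) * p := by
            rw [Finset.sum_const, Finset.card_erase_of_mem (Finset.mem_univ j),
              Finset.card_univ, Fintype.card_fin, smul_eq_mul]
    omega
  refine ⟨⟨(), i0, (p - nvec i0) + 1,
    fun s k => if s.val = 0 then starP m (p - nvec (nextCol i0 k)) else leafP m⟩, ?_⟩
  intro j
  simp only [PtdRaw.ncol]
  rw [Fin.sum_univ_succ]
  simp only [Fin.val_zero, if_true, Fin.val_succ, Nat.succ_ne_zero, if_false, reduceIte,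
    ncol_leafP, ncol_starP hm, sum_ind hm, Finset.sum_const, Finset.card_univ,
    Fintype.card_fin, smul_eq_mul]
  have hg := sum_nextCol hm i0
    (fun c => (if j = c then 1 else 0) + (p - nvec c) * (if j = c then 0 else 1))
  rw [Finset.sum_add_distrib, Finset.sum_add_distrib] at hg
  have hone : (∑ c : Fin m, if j = c then (1:ℕ) else 0) = 1 := by
    rw [Finset.sum_ite_eq]; simp
  rw [hone] at hg
  rw [Finset.sum_add_distrib]
  have hB : (∑ c, (p - nvec c) * (if j = c then 0 else 1)) + (p - nvec j)
      = ∑ c, (p - nvec c) := by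
    have h1 : ∀ c : Fin m,
        (p - nvec c) * (if j = c then 0 else 1) + (if j = c then (p - nvec c) else 0)
          = p - nvec c := by
      intro c; split <;> simp
    calc (∑ c, (p - nvec c) * (if j = c then 0 else 1)) + (p - nvec j)
        = (∑ c, (p - nvec c) * (if j = c then 0 else 1))
            + ∑ c, (if j = c then (p - nvec c) else 0) := by
          rw [Finset.sum_ite_eq]; simp
      _ = ∑ c, (p - nvec c) := by
          rw [← Finset.sum_add_distrib]; exact Finset.sum_congr rfl fun c _ => h1 c
  have hD : (∑ c, (p - nvec c)) + ∑ c, nvec c = m * p := by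
    rw [← Finset.sum_add_distrib]
    calc ∑ c, ((p - nvec c) + nvec c) = ∑ _c : Fin m, p :=
          Finset.sum_congr rfl fun c _ => by have := hle c; omega
      _ = m * p := by simp [mul_comm]
  have hmp : m * p = (m-1) * p + p := by
    have h : m - 1 + 1 = m := by omega
    calc m * p = (m - 1 + 1) * p := by rw [h]
      _ = (m-1) * p + p := by ring
  have hgj := hge j; have hlej := hle j
  have hgi0 := hge i0; have hlei0 := hle i0
  by_cases hji : j = i0
  · subst hji
    simp only [if_pos rfl] at hg ⊢
    omega
  · simp only [if_neg hji] at hg ⊢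
    omega

end CactusAux3


/-- existence of an m-ary cactus with vertex-color distribution
(n₁,…,n_m) iff p = (n-1)/(m-1) is a nonnegative integer and, when p ≥ 1,
n_i ≤ p for every i. -/
theorem stmt_2 {m : ℕ} (hm : 2 ≤ m) (nvec : Fin m → ℕ) (n : ℕ)
    (hn : n = ∑ i, nvec i) :
    (∃ x : PtdRaw m Unit, ∀ i, x.ncol i = nvec i) ↔
      ∃ p : ℕ, n = (m - 1) * p + 1 ∧ (1 ≤ p → ∀ i, nvec i ≤ p) := by
  constructor
  · rintro ⟨x, hx⟩
    refine ⟨x.np, ?_, ?_⟩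
    · have h1 := ptd_nv hm x
      have h2 := ptd_sum_ncol hm x
      have h3 : ∑ i, x.ncol i = ∑ i, nvec i := Finset.sum_congr rfl fun i _ => hx i
      rw [hn, ← h3, h2, h1]
    · intro hp i
      rw [← hx i]
      exact ptd_ncol_le hm x hp i
  · rintro ⟨p, hnp, hple⟩
    rcases Nat.eq_zero_or_pos p with rfl | hp
    · have h1 : ∑ i, nvec i = 1 := by rw [← hn]; omega
      obtain ⟨i0, hi0⟩ : ∃ i, nvec i ≠ 0 := by
        by_contra h
        push_neg at h
        rw [Finset.sum_eq_zero (fun i _ => h i)] at h1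
        omega
      refine ⟨⟨(), i0, 0, fun s _ => s.elim0⟩, ?_⟩
      intro j
      have hcol : PtdRaw.ncol ⟨(), i0, 0, fun s _ => s.elim0⟩ j = if j = i0 then 1 else 0 := by
        simp [PtdRaw.ncol]
      rw [hcol]
      have hle1 : nvec i0 ≤ ∑ i, nvec i :=
        Finset.single_le_sum (fun i _ => Nat.zero_le _) (Finset.mem_univ i0)
      by_cases hji : j = i0
      · subst hji; rw [if_pos rfl]; omega
      · rw [if_neg hji]
        have hsplit : nvec i0 + ∑ i ∈ Finset.univ.erase i0, nvec i = 1 := by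
          rw [Finset.add_sum_erase _ _ (Finset.mem_univ i0)]; exact h1
        have hj : nvec j ≤ ∑ i ∈ Finset.univ.erase i0, nvec i :=
          Finset.single_le_sum (fun i _ => Nat.zero_le _)
            (Finset.mem_erase.2 ⟨hji, Finset.mem_univ j⟩)
        omega
    · exact exists_cactus hm p hp nvec (by rw [← hn]; exact hnp) (hple hp)
end

section
/- Given m ≥ 2 and an m×∞ matrix N = (n_{ij}) of nonnegative integers with n = Σ_{i,j} n_{ij}, there exists an m-ary cactus with vertex-degree distribution N (n_{ij} vertices of color i and degree j) if and only if (1) p := (n-1)/(m-1) is a nonnegative integer, (2) Σ_j j·n_{ij} = p for all i, and (3) if p ≥ 1 then n_{i0} = 0 for all i. -/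
namespace CactusAux
def leafP (m : ℕ) : Planted m Unit := .node () 0 (fun s _ => s.elim0)

lemma ndeg_leaf {m : ℕ} (r : ℕ) (i j : Fin m) (d : ℕ) :
    Planted.ndeg r i (leafP m) j d = if j = i ∧ d = r then 1 else 0 := by
  simp [Planted.ndeg, leafP]

lemma sum_nextCol {m : ℕ} (i : Fin m) (f : Fin m → ℕ) :
    (∑ k : Fin (m - 1), f (nextCol i k)) + f i = ∑ x, f x := by
  obtain ⟨m', rfl⟩ : ∃ m', m = m' + 1 := ⟨m - 1, by have := i.pos; omega⟩
  rcases Nat.eq_zero_or_pos m' with h | h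
  · subst h
    have hi : i = 0 := Fin.ext (by omega)
    subst hi
    simp [Fin.sum_univ_one]
  · have e : ∑ k : Fin (m' + 1), f (i + 1 + k) = ∑ x : Fin (m' + 1), f x :=
      Fintype.sum_equiv (Equiv.addLeft (i + 1)) _ _ (fun k => rfl)
    rw [← e, Fin.sum_univ_castSucc]
    have h0 : (1 : Fin (m' + 1)) + Fin.last m' = 0 := by
      apply Fin.ext
      rw [Fin.val_add, Fin.val_one', Fin.val_last]
      rw [Nat.mod_eq_of_lt (by omega : 1 < m' + 1)]
      simp [Nat.add_comm]
    have hlast : i + 1 + Fin.last m' = i := by rw [add_assoc, h0, add_zero]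
    have hcast : ∀ k : Fin m', i + 1 + Fin.castSucc k = nextCol i k := by
      intro k
      apply Fin.ext
      rw [Fin.val_add, Fin.val_add, Fin.val_one']
      rw [Nat.mod_eq_of_lt (by omega : 1 < m' + 1)]
      show ((↑i + 1) % (m' + 1) + ↑(Fin.castSucc k)) % (m' + 1) = _
      rw [Nat.mod_add_mod]
      rfl
    rw [hlast]
    congr 1
    exact Finset.sum_congr rfl (fun k _ => by rw [hcast])

lemma sum_ite_nextCol {m : ℕ} (i j : Fin m) (c : ℕ) :
    (∑ k : Fin (m - 1), if j = nextCol i k then c else 0) = if j = i then 0 else c := by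
  have h := sum_nextCol i (fun x => if j = x then c else 0)
  simp only [Finset.sum_ite_eq, Finset.mem_univ, if_true] at h
  rcases eq_or_ne j i with rfl | hji
  · simpa using h
  · simp only [if_neg hji] at h ⊢
    omega

lemma ndeg_eq_zero_of_lt {m : ℕ} {α : Type} (x : Planted m α) :
    ∀ r i j d, Planted.np x + r < d → Planted.ndeg r i x j d = 0 := by
  induction x with
  | node a t f ih =>
    intro r i j d hd
    simp only [Planted.ndeg, Planted.np] at *
    rw [if_neg (by omega : ¬(j = i ∧ d = t + r)), Finset.sum_eq_zero, zero_add]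
    intro s _
    apply Finset.sum_eq_zero
    intro k _
    apply ih
    have h1 : Planted.np (f s k) ≤ ∑ s : Fin t, ∑ k : Fin (m-1), Planted.np (f s k) := by
      calc Planted.np (f s k) ≤ ∑ k' : Fin (m-1), Planted.np (f s k') :=
            Finset.single_le_sum (f := fun k' => Planted.np (f s k'))
              (fun _ _ => Nat.zero_le _) (Finset.mem_univ k)
        _ ≤ _ := Finset.single_le_sum (f := fun s' => ∑ k' : Fin (m-1), Planted.np (f s' k'))
            (fun _ _ => Nat.zero_le _) (Finset.mem_univ s)
    have ht : 1 ≤ t := s.pos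
    omega
lemma range_ite_sum (B c : ℕ) (P : Prop) [Decidable P] (v : ℕ → ℕ) (hc : c < B) :
    (∑ d ∈ Finset.range B, if P ∧ d = c then v d else 0) = if P then v c else 0 := by
  by_cases hP : P
  · simp only [hP, true_and, if_true]
    rw [Finset.sum_ite_eq' (Finset.range B) c v]
    simp [hc]
  · simp [hP]

lemma np_child_le {m : ℕ} {α : Type} {t : ℕ} (f : Fin t → Fin (m-1) → Planted m α)
    (s : Fin t) (k : Fin (m-1)) :
    Planted.np (f s k) + 1 ≤ t + ∑ s' : Fin t, ∑ k' : Fin (m-1), Planted.np (f s' k') := by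
  have h1 : Planted.np (f s k) ≤ ∑ s' : Fin t, ∑ k' : Fin (m-1), Planted.np (f s' k') := by
    calc Planted.np (f s k) ≤ ∑ k' : Fin (m-1), Planted.np (f s k') :=
          Finset.single_le_sum (f := fun k' => Planted.np (f s k'))
            (fun _ _ => Nat.zero_le _) (Finset.mem_univ k)
      _ ≤ _ := Finset.single_le_sum (f := fun s' => ∑ k' : Fin (m-1), Planted.np (f s' k'))
          (fun _ _ => Nat.zero_le _) (Finset.mem_univ s)
  have ht : 1 ≤ t := s.pos
  omega

lemma sum_ndeg {m : ℕ} {α : Type} (x : Planted m α) :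
    ∀ B r i j, Planted.np x + r < B →
      (∑ d ∈ Finset.range B, Planted.ndeg r i x j d) = Planted.ncol i x j := by
  induction x with
  | node a t f ih =>
    intro B r i j hB
    simp only [Planted.ndeg, Planted.ncol, Planted.np] at *
    rw [Finset.sum_add_distrib]
    congr 1
    · exact range_ite_sum _ _ _ _ (by omega)
    · rw [Finset.sum_comm]
      refine Finset.sum_congr rfl (fun s _ => ?_)
      rw [Finset.sum_comm]
      refine Finset.sum_congr rfl (fun k _ => ?_)
      exact ih s k B 1 (nextCol i k) j (by have := np_child_le f s k; omega)

lemma sum_mul_ndeg {m : ℕ} {α : Type} (x : Planted m α) :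
    ∀ B r i j, Planted.np x + r < B →
      (∑ d ∈ Finset.range B, d * Planted.ndeg r i x j d)
        = Planted.np x + if j = i then r else 0 := by
  induction x with
  | node a t f ih =>
    intro B r i j hB
    simp only [Planted.ndeg, Planted.np] at *
    have h1 : (∑ d ∈ Finset.range B, d * ((if j = i ∧ d = t + r then 1 else 0) +
        ∑ s : Fin t, ∑ k : Fin (m-1), Planted.ndeg 1 (nextCol i k) (f s k) j d))
        = (∑ d ∈ Finset.range B, (if j = i ∧ d = t + r then d else 0)) +
          ∑ d ∈ Finset.range B, ∑ s : Fin t, ∑ k : Fin (m-1),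
            d * Planted.ndeg 1 (nextCol i k) (f s k) j d := by
      rw [← Finset.sum_add_distrib]
      refine Finset.sum_congr rfl (fun d _ => ?_)
      rw [Nat.mul_add, Finset.mul_sum]
      congr 1
      · split <;> simp
      · exact Finset.sum_congr rfl (fun s _ => Finset.mul_sum _ _ _)
    rw [h1, range_ite_sum _ _ _ _ (by omega : t + r < B)]
    have h2 : (∑ d ∈ Finset.range B, ∑ s : Fin t, ∑ k : Fin (m-1),
          d * Planted.ndeg 1 (nextCol i k) (f s k) j d)
        = ∑ s : Fin t, ∑ k : Fin (m-1), (Planted.np (f s k) +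
            if j = nextCol i k then 1 else 0) := by
      rw [Finset.sum_comm]
      refine Finset.sum_congr rfl (fun s _ => ?_)
      rw [Finset.sum_comm]
      refine Finset.sum_congr rfl (fun k _ => ?_)
      exact ih s k B 1 (nextCol i k) j (by have := np_child_le f s k; omega)
    rw [h2]
    have h3 : (∑ s : Fin t, ∑ k : Fin (m-1), (Planted.np (f s k) +
          if j = nextCol i k then 1 else 0))
        = (∑ s : Fin t, ∑ k : Fin (m-1), Planted.np (f s k)) +
          t * (if j = i then 0 else 1) := by
      have : ∀ s : Fin t, (∑ k : Fin (m-1), (Planted.np (f s k) +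
          if j = nextCol i k then 1 else 0))
          = (∑ k : Fin (m-1), Planted.np (f s k)) + (if j = i then 0 else 1) := by
        intro s
        rw [Finset.sum_add_distrib, sum_ite_nextCol]
      rw [Finset.sum_congr rfl (fun s _ => this s), Finset.sum_add_distrib,
        Finset.sum_const, Finset.card_univ]
      simp [mul_comm]
    rw [h3]
    rcases eq_or_ne j i with rfl | hji
    · simp
      omega
    · simp [hji]
      omega

lemma sum_ncol {m : ℕ} {α : Type} (x : Planted m α) (i : Fin m) :
    (∑ j, Planted.ncol i x j) = Planted.nv x := by
  induction x generalizing i with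
  | node a t f ih =>
    simp only [Planted.ncol, Planted.nv]
    rw [Finset.sum_add_distrib]
    congr 1
    · simp
    · rw [Finset.sum_comm]
      refine Finset.sum_congr rfl (fun s _ => ?_)
      rw [Finset.sum_comm]
      exact Finset.sum_congr rfl (fun k _ => ih s k _)

lemma nv_eq {m : ℕ} {α : Type} (x : Planted m α) :
    Planted.nv x = (m - 1) * Planted.np x + 1 := by
  induction x with
  | node a t f ih =>
    simp only [Planted.nv, Planted.np]
    rw [Finset.sum_congr rfl (fun s _ => Finset.sum_congr rfl (fun k _ => ih s k))]
    have e1 : ∀ s : Fin t, (∑ k : Fin (m-1), ((m-1) * Planted.np (f s k) + 1))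
        = (m-1) * (∑ k : Fin (m-1), Planted.np (f s k)) + (m-1) := by
      intro s
      rw [Finset.sum_add_distrib, ← Finset.mul_sum, Finset.sum_const, Finset.card_univ]
      simp only [Fintype.card_fin, smul_eq_mul, mul_one]
    rw [Finset.sum_congr rfl (fun s _ => e1 s), Finset.sum_add_distrib,
      ← Finset.mul_sum, Finset.sum_const, Finset.card_univ]
    simp only [Fintype.card_fin, smul_eq_mul]
    ring

lemma ndeg_zero {m : ℕ} {α : Type} (x : Planted m α) :
    ∀ r i j, 1 ≤ r → Planted.ndeg r i x j 0 = 0 := by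
  induction x with
  | node a t f ih =>
    intro r i j hr
    simp only [Planted.ndeg]
    rw [if_neg (by omega : ¬(j = i ∧ 0 = t + r)), zero_add]
    exact Finset.sum_eq_zero fun s _ => Finset.sum_eq_zero fun k _ => ih s k 1 _ j le_rfl
lemma attach_planted {m : ℕ} (x : Planted m Unit) :
    ∀ r i j0 d0, 1 ≤ Planted.ndeg r i x j0 d0 →
    ∃ y : Planted m Unit, ∀ j d,
      Planted.ndeg r i y j d + (if j = j0 ∧ d = d0 then 1 else 0)
        = Planted.ndeg r i x j d + (if j = j0 ∧ d = d0 + 1 then 1 else 0)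
          + (if (¬ j = j0) ∧ d = 1 then 1 else 0) := by
  induction x with
  | node a t f ih =>
    intro r i j0 d0 hpos
    by_cases hc : j0 = i ∧ d0 = t + r
    · obtain ⟨hji, hd⟩ := hc
      refine ⟨.node a (t+1) (fun s k => if h : s.val < t then f ⟨s.val, h⟩ k else leafP m), ?_⟩
      intro j d
      rw [hji, hd]
      simp only [Planted.ndeg]
      rw [Fin.sum_univ_castSucc]
      have h1 : (∑ s : Fin t, ∑ k : Fin (m-1), Planted.ndeg 1 (nextCol i k)
            (if h : (Fin.castSucc s).val < t then f ⟨(Fin.castSucc s).val, h⟩ k else leafP m) j d)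
          = ∑ s : Fin t, ∑ k : Fin (m-1), Planted.ndeg 1 (nextCol i k) (f s k) j d := by
        refine Finset.sum_congr rfl (fun s _ => Finset.sum_congr rfl (fun k _ => ?_))
        rw [dif_pos (by simp [s.isLt] : (Fin.castSucc s).val < t)]
        exact congrArg (fun z : Fin t => Planted.ndeg 1 (nextCol i k) (f z k) j d)
          (Fin.ext (by simp))
      have h2 : (∑ k : Fin (m-1), Planted.ndeg 1 (nextCol i k)
            (if h : (Fin.last t).val < t then f ⟨(Fin.last t).val, h⟩ k else leafP m) j d)
          = if (¬ j = i) ∧ d = 1 then 1 else 0 := by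
        have : ∀ k : Fin (m-1), Planted.ndeg 1 (nextCol i k)
            (if h : (Fin.last t).val < t then f ⟨(Fin.last t).val, h⟩ k else leafP m) j d
            = if j = nextCol i k then (if d = 1 then 1 else 0) else 0 := by
          intro k
          rw [dif_neg (by simp : ¬ (Fin.last t).val < t), ndeg_leaf]
          by_cases h : j = nextCol i k <;> by_cases h' : d = 1 <;> simp [h, h']
        rw [Finset.sum_congr rfl (fun k _ => this k), sum_ite_nextCol]
        by_cases h : j = i <;> by_cases h' : d = 1 <;> simp [h, h']
      rw [h1, h2]
      have ht : t + 1 + r = t + r + 1 := by omega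
      rw [ht]
      set A := if j = i ∧ d = t + r + 1 then 1 else 0 with hA
      set B := if j = i ∧ d = t + r then 1 else 0 with hB
      set E := if (¬ j = i) ∧ d = 1 then 1 else 0 with hE
      set S := ∑ s : Fin t, ∑ k : Fin (m-1), Planted.ndeg 1 (nextCol i k) (f s k) j d with hS
      ring
    · rw [Planted.ndeg, if_neg hc, zero_add] at hpos
      obtain ⟨s0, -, hs0⟩ := Finset.exists_ne_zero_of_sum_ne_zero (by omega :
        (∑ s : Fin t, ∑ k : Fin (m-1), Planted.ndeg 1 (nextCol i k) (f s k) j0 d0) ≠ 0)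
      obtain ⟨k0, -, hk0⟩ := Finset.exists_ne_zero_of_sum_ne_zero hs0
      obtain ⟨y0, hy0⟩ := ih s0 k0 1 (nextCol i k0) j0 d0 (by omega)
      refine ⟨.node a t (fun s k => if s = s0 ∧ k = k0 then y0 else f s k), ?_⟩
      intro j d
      simp only [Planted.ndeg]
      have split1 : ∀ F : Fin t → ℕ, (∑ s, F s) = F s0 + ∑ s ∈ Finset.univ.erase s0, F s :=
        fun F => (Finset.add_sum_erase _ F (Finset.mem_univ s0)).symm
      have split2 : ∀ F : Fin (m-1) → ℕ, (∑ k, F k) = F k0 + ∑ k ∈ Finset.univ.erase k0, F k :=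
        fun F => (Finset.add_sum_erase _ F (Finset.mem_univ k0)).symm
      rw [split1 (fun s => ∑ k : Fin (m-1), Planted.ndeg 1 (nextCol i k)
            (if s = s0 ∧ k = k0 then y0 else f s k) j d),
          split1 (fun s => ∑ k : Fin (m-1), Planted.ndeg 1 (nextCol i k) (f s k) j d)]
      rw [split2 (fun k => Planted.ndeg 1 (nextCol i k)
            (if s0 = s0 ∧ k = k0 then y0 else f s0 k) j d),
          split2 (fun k => Planted.ndeg 1 (nextCol i k) (f s0 k) j d)]
      have e1 : (∑ s ∈ Finset.univ.erase s0, ∑ k : Fin (m-1), Planted.ndeg 1 (nextCol i k)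
            (if s = s0 ∧ k = k0 then y0 else f s k) j d)
          = ∑ s ∈ Finset.univ.erase s0, ∑ k : Fin (m-1),
              Planted.ndeg 1 (nextCol i k) (f s k) j d := by
        refine Finset.sum_congr rfl (fun s hs => Finset.sum_congr rfl (fun k _ => ?_))
        rw [if_neg (by simp at hs; tauto)]
      have e2 : (∑ k ∈ Finset.univ.erase k0, Planted.ndeg 1 (nextCol i k)
            (if s0 = s0 ∧ k = k0 then y0 else f s0 k) j d)
          = ∑ k ∈ Finset.univ.erase k0, Planted.ndeg 1 (nextCol i k) (f s0 k) j d := by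
        refine Finset.sum_congr rfl (fun k hk => ?_)
        rw [if_neg (by simp at hk; tauto)]
      have e3 : (if s0 = s0 ∧ k0 = k0 then y0 else f s0 k0) = y0 := by simp
      rw [e1, e2, e3]
      have key := hy0 j d
      omega
def toP {m : ℕ} {α : Type} (x : PtdRaw m α) : Planted m α := .node x.lab x.t x.polys

lemma ndeg_toP {m : ℕ} {α : Type} (x : PtdRaw m α) (j : Fin m) (d : ℕ) :
    x.ndeg j d = Planted.ndeg 0 x.col (toP x) j d := rfl

lemma np_toP {m : ℕ} {α : Type} (x : PtdRaw m α) : Planted.np (toP x) = x.np := rfl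

lemma attach_ptd {m : ℕ} (x : PtdRaw m Unit) (j0 : Fin m) (d0 : ℕ)
    (h : 1 ≤ x.ndeg j0 d0) :
    ∃ y : PtdRaw m Unit, y.col = x.col ∧ ∀ j d,
      y.ndeg j d + (if j = j0 ∧ d = d0 then 1 else 0)
        = x.ndeg j d + (if j = j0 ∧ d = d0 + 1 then 1 else 0)
          + (if (¬ j = j0) ∧ d = 1 then 1 else 0) := by
  rw [ndeg_toP] at h
  obtain ⟨y, hy⟩ := attach_planted (toP x) 0 x.col j0 d0 h
  obtain ⟨a, t, f⟩ := y
  refine ⟨⟨a, x.col, t, f⟩, rfl, fun j d => ?_⟩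
  rw [ndeg_toP, ndeg_toP]
  exact hy j d
lemma ndeg_zero_root {m : ℕ} {α : Type} (x : Planted m α) (i j : Fin m)
    (h : 1 ≤ Planted.np x) : Planted.ndeg 0 i x j 0 = 0 := by
  obtain ⟨a, t, f⟩ := x
  have ht : t ≠ 0 := by
    intro h0
    subst h0
    simp [Planted.np] at h
  simp only [Planted.ndeg]
  rw [if_neg (by omega : ¬(j = i ∧ 0 = t + 0)), zero_add]
  exact Finset.sum_eq_zero fun s _ => Finset.sum_eq_zero fun k _ =>
    ndeg_zero _ 1 _ _ le_rfl

lemma forward {m : ℕ} (N : Fin m → ℕ →₀ ℕ) (n : ℕ)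
    (hn : n = ∑ i, (N i).sum fun _ v => v)
    (x : PtdRaw m Unit) (hx : ∀ i j, x.ndeg i j = N i j) :
    ∃ p : ℕ, n = (m - 1) * p + 1 ∧ (∀ i, ((N i).sum fun j v => j * v) = p) ∧
      (1 ≤ p → ∀ i, N i 0 = 0) := by
  set X := toP x with hX
  set p := Planted.np X with hp
  have hBnd : ∀ i d, N i d ≠ 0 → d < p + 1 := by
    intro i d h
    by_contra hd
    exact h (by rw [← hx, ndeg_toP]; exact ndeg_eq_zero_of_lt X 0 x.col i d (by omega))
  have hsupp : ∀ i, (N i).support ⊆ Finset.range (p + 1) := by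
    intro i d hd
    rw [Finset.mem_range]
    exact hBnd i d (Finsupp.mem_support_iff.mp hd)
  have hrow : ∀ (i : Fin m) (g : ℕ → ℕ → ℕ), (∀ d, g d 0 = 0) →
      (N i).sum g = ∑ d ∈ Finset.range (p + 1), g d (N i d) := fun i g hg =>
    Finsupp.sum_of_support_subset _ (hsupp i) _ (fun d _ => hg d)
  refine ⟨p, ?_, ?_, ?_⟩
  · rw [hn]
    have hcol : ∀ i : Fin m, (N i).sum (fun _ v => v) = Planted.ncol x.col X i := by
      intro i
      rw [hrow i _ (fun _ => rfl),
        Finset.sum_congr rfl (fun d _ => (hx i d).symm.trans (ndeg_toP x i d))]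
      exact sum_ndeg X (p + 1) 0 x.col i (by omega)
    rw [Finset.sum_congr rfl (fun i _ => hcol i), sum_ncol, nv_eq]
  · intro i
    rw [hrow i _ (fun d => by simp),
      Finset.sum_congr rfl (fun d _ => by rw [(hx i d).symm.trans (ndeg_toP x i d)])]
    have h2 := sum_mul_ndeg X (p + 1) 0 x.col i (by omega)
    simpa using h2
  · intro hp1 i
    rw [← hx, ndeg_toP]
    exact ndeg_zero_root X x.col i hp1
lemma find_attach {m : ℕ} (B P : ℕ) (M : Fin m → ℕ → ℕ) (hm : 1 ≤ m)
    (hb : ∀ i d, B ≤ d → M i d = 0)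
    (hw : ∀ i, (∑ d ∈ Finset.range B, d * M i d) = P)
    (h2 : 2 ≤ P)
    (h0 : ∀ i, M i 0 = 0)
    (htot : (∑ i, ∑ d ∈ Finset.range B, M i d) = (m - 1) * P + 1) :
    ∃ (i0 : Fin m) (dd : ℕ), 2 ≤ dd ∧ 1 ≤ M i0 dd ∧ ∀ j, j ≠ i0 → 1 ≤ M j 1 := by
  have FA : ∀ j, (∑ d ∈ Finset.range B, M j d) ≤ P := by
    intro j
    rw [← hw j]
    refine Finset.sum_le_sum (fun d _ => ?_)
    rcases Nat.eq_zero_or_pos d with rfl | hd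
    · simp [h0]
    · exact Nat.le_mul_of_pos_left _ hd
  have FB : ∀ j, M j 1 = 0 → 2 * (∑ d ∈ Finset.range B, M j d) ≤ P := by
    intro j hj1
    rw [← hw j, Finset.mul_sum]
    refine Finset.sum_le_sum (fun d _ => ?_)
    match d with
    | 0 => simp [h0]
    | 1 => simp [hj1]
    | (e+2) => exact Nat.mul_le_mul_right _ (by omega)
  by_cases hex : ∃ i1 : Fin m, M i1 1 = 0
  · obtain ⟨i0, hi0⟩ := hex
    obtain ⟨dd, -, hdd⟩ := Finset.exists_ne_zero_of_sum_ne_zero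
      (by rw [hw i0]; omega : (∑ d ∈ Finset.range B, d * M i0 d) ≠ 0)
    refine ⟨i0, dd, ?_, ?_, ?_⟩
    · match dd, hdd with
      | 0, h => simp at h
      | 1, h => simp [hi0] at h
      | (e+2), h => omega
    · rcases Nat.eq_zero_or_pos (M i0 dd) with h | h
      · rw [h, Nat.mul_zero] at hdd; omega
      · exact h
    · intro j hj
      by_contra hj1
      have hj1' : M j 1 = 0 := by omega
      have key : (∑ i, (2 * (∑ d ∈ Finset.range B, M i d) +
            (if i = i0 ∨ i = j then P else 0))) ≤ ∑ _i : Fin m, 2 * P := by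
        refine Finset.sum_le_sum (fun i _ => ?_)
        rcases eq_or_ne i i0 with rfl | h1
        · simp only [true_or, if_pos]
          have := FB i hi0
          omega
        · rcases eq_or_ne i j with rfl | h2'
          · simp only [or_true, if_pos]
            have := FB i hj1'
            omega
          · rw [if_neg (by tauto)]
            have := FA i
            omega
      have e1 : (∑ i, (2 * (∑ d ∈ Finset.range B, M i d) +
            (if i = i0 ∨ i = j then P else 0)))
          = 2 * ((m-1) * P + 1) + 2 * P := by
        rw [Finset.sum_add_distrib, ← Finset.mul_sum, htot]
        congr 1
        have : ∀ i : Fin m, (if i = i0 ∨ i = j then P else 0)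
            = (if i = i0 then P else 0) + (if i = j then P else 0) := by
          intro i
          rcases eq_or_ne i i0 with rfl | h1 <;> rcases eq_or_ne i j with rfl | h2' <;>
            simp_all
        rw [Finset.sum_congr rfl (fun i _ => this i), Finset.sum_add_distrib]
        simp [Finset.sum_ite_eq']
        omega
      have e2 : (∑ _i : Fin m, 2 * P) = m * (2 * P) := by
        rw [Finset.sum_const, Finset.card_univ, Fintype.card_fin, smul_eq_mul]
      rw [e1, e2] at key
      obtain ⟨m', rfl⟩ : ∃ m', m = m' + 1 := ⟨m - 1, by omega⟩
      have hc : m' + 1 - 1 = m' := rfl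
      rw [hc] at key
      have hmm : (m' + 1) * (2 * P) = 2 * (m' * P) + 2 * P := by ring
      rw [hmm] at key
      omega
  · push_neg at hex
    by_contra hno
    push_neg at hno
    have hz : ∀ (i : Fin m) (d : ℕ), 2 ≤ d → M i d = 0 := by
      intro i d hd
      rcases Nat.eq_zero_or_pos (M i d) with h | h
      · exact h
      · have := hno i d hd
        have := hex i
        -- hno : ∀ i0 dd, 2 ≤ dd → 1 ≤ M i0 dd → ∃ j ≠ i0, ¬ 1 ≤ M j 1
        obtain ⟨j, hj, hj1⟩ := hno i d hd h
        have := hex j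
        omega
    have h1B : 1 < B := by
      by_contra hB
      have := hb ⟨0, by omega⟩ 1 (by omega)
      have := hex ⟨0, by omega⟩
      omega
    have hrow1 : ∀ i : Fin m, M i 1 = P := by
      intro i
      have := hw i
      rw [Finset.sum_eq_single_of_mem 1 (Finset.mem_range.mpr h1B)
        (fun d _ hd1 => by
          match d with
          | 0 => simp
          | 1 => omega
          | (e+2) => rw [hz i _ (by omega)]; ring)] at this
      omega
    have hrown : ∀ i : Fin m, (∑ d ∈ Finset.range B, M i d) = P := by
      intro i
      rw [Finset.sum_eq_single_of_mem 1 (Finset.mem_range.mpr h1B)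
        (fun d _ hd1 => by
          match d with
          | 0 => exact h0 i
          | 1 => omega
          | (e+2) => exact hz i _ (by omega))]
      exact hrow1 i
    rw [Finset.sum_congr rfl (fun i _ => hrown i), Finset.sum_const,
      Finset.card_univ, Fintype.card_fin, smul_eq_mul] at htot
    obtain ⟨m', rfl⟩ : ∃ m', m = m' + 1 := ⟨m - 1, by omega⟩
    have hc : m' + 1 - 1 = m' := rfl
    rw [hc, Nat.add_mul, one_mul] at htot
    omega
lemma sum_range_ite (B c : ℕ) (v : ℕ → ℕ) (hc : c < B) :
    (∑ d ∈ Finset.range B, if d = c then v d else 0) = v c := by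
  rw [Finset.sum_ite_eq' (Finset.range B) c v]
  simp [hc]

lemma construct {m : ℕ} (hm : 2 ≤ m) (B : ℕ) :
    ∀ (p : ℕ) (M : Fin m → ℕ → ℕ),
      (∀ i d, B ≤ d → M i d = 0) →
      (∀ i, (∑ d ∈ Finset.range B, d * M i d) = p) →
      (1 ≤ p → ∀ i, M i 0 = 0) →
      (∑ i, ∑ d ∈ Finset.range B, M i d) = (m - 1) * p + 1 →
      ∃ x : PtdRaw m Unit, ∀ i d, x.ndeg i d = M i d := by
  intro p
  induction p with
  | zero =>
    intro M hb hw _ htot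
    rw [Nat.mul_zero, Nat.zero_add] at htot
    have hz : ∀ (i : Fin m) (d : ℕ), 1 ≤ d → M i d = 0 := by
      intro i d hd
      rcases le_or_gt B d with h | h
      · exact hb i d h
      · have h1 := (Finset.sum_eq_zero_iff).mp (hw i) d (Finset.mem_range.mpr h)
        rcases Nat.mul_eq_zero.mp h1 with h2 | h2
        · omega
        · exact h2
    have hB0 : 0 < B := by
      rcases Nat.eq_zero_or_pos B with rfl | h
      · simp at htot
      · exact h
    have hrow : ∀ i : Fin m, (∑ d ∈ Finset.range B, M i d) = M i 0 := by
      intro i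
      exact Finset.sum_eq_single_of_mem 0 (Finset.mem_range.mpr hB0)
        (fun d _ hd => hz i d (by omega))
    rw [Finset.sum_congr rfl (fun i _ => hrow i)] at htot
    obtain ⟨is, -, his⟩ := Finset.exists_ne_zero_of_sum_ne_zero
      (by omega : (∑ i : Fin m, M i 0) ≠ 0)
    have hle : M is 0 ≤ 1 := by
      rw [← htot]
      exact Finset.single_le_sum (f := fun i => M i 0) (fun _ _ => Nat.zero_le _)
        (Finset.mem_univ is)
    have h1 : M is 0 = 1 := by omega
    have hrest : ∀ i : Fin m, i ≠ is → M i 0 = 0 := by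
      intro i hi
      have hsplit : M is 0 + ∑ i ∈ Finset.univ.erase is, M i 0 = 1 :=
        (Finset.add_sum_erase _ (fun i => M i 0) (Finset.mem_univ is)).trans htot
      have hzero : (∑ i ∈ Finset.univ.erase is, M i 0) = 0 := by omega
      exact (Finset.sum_eq_zero_iff).mp hzero i (Finset.mem_erase.mpr ⟨hi, Finset.mem_univ i⟩)
    refine ⟨⟨(), is, 0, fun s _ => s.elim0⟩, fun i d => ?_⟩
    simp only [PtdRaw.ndeg, Finset.univ_eq_empty, Finset.sum_empty, add_zero]
    rcases Nat.eq_zero_or_pos d with rfl | hd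
    · rcases eq_or_ne i is with rfl | hi
      · simp [h1]
      · simp [hi, hrest i hi]
    · rw [if_neg (by omega), hz i d (by omega)]
  | succ p ih =>
    intro M hb hw h0 htot
    have h0' := h0 (by omega)
    rcases Nat.eq_zero_or_pos p with rfl | hp
    · -- single polygon
      have h1B : 1 < B := by
        by_contra hB
        have hww := hw ⟨0, by omega⟩
        rw [Finset.sum_eq_zero (fun d hd => by
          have hd' : d = 0 := by simp only [Finset.mem_range] at hd; omega
          simp [hd'])] at hww
        omega
      have hrow1 : ∀ i : Fin m, M i 1 = 1 ∧ ∀ d, d ≠ 1 → M i d = 0 := by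
        intro i
        have hz2 : ∀ d, 2 ≤ d → M i d = 0 := by
          intro d hd
          rcases le_or_gt B d with h | h
          · exact hb i d h
          · have hw1 : (∑ d ∈ Finset.range B, d * M i d) = 1 := by simpa using hw i
            have hle : d * M i d ≤ 1 := hw1 ▸ Finset.single_le_sum (f := fun d => d * M i d)
                (fun _ _ => Nat.zero_le _) (Finset.mem_range.mpr h)
            rcases Nat.eq_zero_or_pos (M i d) with h' | h'
            · exact h'
            · exfalso
              have := Nat.le_mul_of_pos_right d h'
              omega
        have h1 : M i 1 = 1 := by
          have hww : (∑ d ∈ Finset.range B, d * M i d) = 1 := by simpa using hw i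
          rw [Finset.sum_eq_single_of_mem 1 (Finset.mem_range.mpr h1B) (fun d _ hd =>
            match d, hd with
            | 0, _ => by simp
            | (e+2), _ => by rw [hz2 _ (by omega)]; ring)] at hww
          omega
        exact ⟨h1, fun d hd =>
          match d, hd with
          | 0, _ => h0' i
          | (e+2), _ => hz2 _ (by omega)⟩
      refine ⟨⟨(), ⟨0, by omega⟩, 1, fun _ _ => leafP m⟩, fun i d => ?_⟩
      set c0 : Fin m := ⟨0, by omega⟩ with hc0
      simp only [PtdRaw.ndeg]
      rw [Fin.sum_univ_one]
      have hsum : (∑ k : Fin (m-1), Planted.ndeg 1 (nextCol c0 k) (leafP m) i d)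
          = if (¬ i = c0) ∧ d = 1 then 1 else 0 := by
        have hterm : ∀ k : Fin (m-1), Planted.ndeg 1 (nextCol c0 k) (leafP m) i d
            = if i = nextCol c0 k then (if d = 1 then 1 else 0) else 0 := by
          intro k
          rw [ndeg_leaf]
          by_cases h : i = nextCol c0 k <;> by_cases h' : d = 1 <;> simp [h, h']
        rw [Finset.sum_congr rfl (fun k _ => hterm k), sum_ite_nextCol]
        by_cases h : i = c0 <;> by_cases h' : d = 1 <;> simp [h, h']
      rw [hsum]
      obtain ⟨hM1, hMne⟩ := hrow1 i
      rcases eq_or_ne d 1 with rfl | hd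
      · rcases eq_or_ne i c0 with rfl | hi
        · simp [hM1]
        · simp [hi, hM1]
      · rw [if_neg (by tauto), if_neg (by tauto), hMne d hd]
    · -- inductive step
      obtain ⟨i0, dd, hdd2, hMdd, hothers⟩ := find_attach B (p+1) M (by omega) hb hw
        (by omega) h0' htot
      have hddB : dd < B := by
        by_contra h
        have := hb i0 dd (by omega)
        omega
      set M' : Fin m → ℕ → ℕ := fun j d =>
        if j = i0 then (if d = dd then M j d - 1 else if d = dd - 1 then M j d + 1 else M j d)
        else (if d = 1 then M j d - 1 else M j d) with hM'
      have P1 : ∀ d, M' i0 d + (if d = dd then 1 else 0)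
          = M i0 d + (if d = dd - 1 then 1 else 0) := by
        intro d
        simp only [hM', if_pos rfl]
        rcases eq_or_ne d dd with rfl | h1
        · rw [if_pos rfl, if_pos rfl, if_neg (by omega)]
          omega
        · rw [if_neg h1, if_neg h1]
          rcases eq_or_ne d (dd - 1) with rfl | h2
          · simp
          · simp [h2]
      have P2 : ∀ j, j ≠ i0 → ∀ d, M' j d + (if d = 1 then 1 else 0) = M j d := by
        intro j hj d
        simp only [hM', if_neg hj]
        rcases eq_or_ne d 1 with rfl | h1
        · have := hothers j hj
          simp
          omega
        · simp [h1]
      have hb' : ∀ i d, B ≤ d → M' i d = 0 := by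
        intro i d hd
        have hz := hb i d hd
        simp only [hM']
        split <;> (repeat' split) <;> omega
      have hw' : ∀ i, (∑ d ∈ Finset.range B, d * M' i d) = p := by
        intro i
        rcases eq_or_ne i i0 with rfl | hi
        · have Q1 : ∀ d, d * M' i d + (if d = dd then d else 0)
              = d * M i d + (if d = dd - 1 then d else 0) := by
            intro d
            have h2 := congrArg (fun z => d * z) (P1 d)
            simpa only [mul_add, mul_ite, mul_one, mul_zero] using h2
          have hs := Finset.sum_congr rfl (fun d (_ : d ∈ Finset.range B) => Q1 d)
          rw [Finset.sum_add_distrib, Finset.sum_add_distrib,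
            sum_range_ite B dd _ hddB, sum_range_ite B (dd-1) _ (by omega)] at hs
          have := hw i
          omega
        · have Q2 : ∀ d, d * M' i d + (if d = 1 then d else 0) = d * M i d := by
            intro d
            have h2 := congrArg (fun z => d * z) (P2 i hi d)
            simpa only [mul_add, mul_ite, mul_one, mul_zero] using h2
          have hs := Finset.sum_congr rfl (fun d (_ : d ∈ Finset.range B) => Q2 d)
          rw [Finset.sum_add_distrib, sum_range_ite B 1 _ (by omega)] at hs
          have := hw i
          omega
      have h0'' : ∀ i : Fin m, M' i 0 = 0 := by
        intro i
        simp only [hM']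
        rcases eq_or_ne i i0 with rfl | hi
        · rw [if_pos rfl, if_neg (by omega), if_neg (by omega)]
          exact h0' i
        · rw [if_neg hi, if_neg (by omega)]
          exact h0' i
      have hrowtot : ∀ i : Fin m, (∑ d ∈ Finset.range B, M' i d) +
          (if i = i0 then 0 else 1) = ∑ d ∈ Finset.range B, M i d := by
        intro i
        rcases eq_or_ne i i0 with rfl | hi
        · rw [if_pos rfl, add_zero]
          have hs := Finset.sum_congr rfl (fun d (_ : d ∈ Finset.range B) => P1 d)
          rw [Finset.sum_add_distrib, Finset.sum_add_distrib,
            sum_range_ite B dd _ hddB, sum_range_ite B (dd-1) _ (by omega)] at hs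
          omega
        · rw [if_neg hi]
          have hs := Finset.sum_congr rfl (fun d (_ : d ∈ Finset.range B) => P2 i hi d)
          rw [Finset.sum_add_distrib, sum_range_ite B 1 _ (by omega)] at hs
          exact hs
      have htot' : (∑ i, ∑ d ∈ Finset.range B, M' i d) = (m - 1) * p + 1 := by
        have hs := Finset.sum_congr rfl
          (fun i (_ : i ∈ (Finset.univ : Finset (Fin m))) => hrowtot i)
        rw [Finset.sum_add_distrib, htot] at hs
        have hite : (∑ i : Fin m, if i = i0 then 0 else 1) = m - 1 := by
          have h1 : (∑ i : Fin m, ((if i = i0 then 0 else 1) + (if i = i0 then 1 else 0)))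
              = m := by
            have he : ∀ i : Fin m, ((if i = i0 then 0 else 1) + (if i = i0 then 1 else 0))
                = 1 := by
              intro i
              split <;> ring
            rw [Finset.sum_congr rfl (fun i _ => he i)]
            simp
          rw [Finset.sum_add_distrib] at h1
          have h2 : (∑ i : Fin m, if i = i0 then 1 else 0) = 1 := by
            simp [Finset.sum_ite_eq']
          omega
        rw [hite] at hs
        rw [Nat.mul_succ] at hs
        omega
      obtain ⟨x', hx'⟩ := ih M' hb' hw' (fun _ => h0'') htot'
      have hpos : 1 ≤ x'.ndeg i0 (dd - 1) := by
        rw [hx']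
        have hP := P1 (dd - 1)
        rw [if_neg (by omega), if_pos rfl] at hP
        omega
      obtain ⟨y, -, hy⟩ := attach_ptd x' i0 (dd - 1) hpos
      refine ⟨y, fun i d => ?_⟩
      have hkey := hy i d
      have hdd1 : dd - 1 + 1 = dd := by omega
      rw [hdd1, hx'] at hkey
      rcases eq_or_ne i i0 with rfl | hi
      · rw [if_neg (by simp : ¬(¬i = i ∧ d = 1)), add_zero] at hkey
        have p1 := P1 d
        rcases eq_or_ne d dd with rfl | h1
        · rw [if_neg (by rintro ⟨-, h'⟩; omega), if_pos ⟨rfl, rfl⟩] at hkey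
          rw [if_pos rfl, if_neg (by omega)] at p1
          omega
        · rcases eq_or_ne d (dd - 1) with rfl | h2
          · rw [if_pos ⟨rfl, rfl⟩, if_neg (by rintro ⟨-, h'⟩; omega)] at hkey
            rw [if_neg (by omega), if_pos rfl] at p1
            omega
          · rw [if_neg (by tauto), if_neg (by tauto)] at hkey
            rw [if_neg h1, if_neg h2] at p1
            omega
      · rw [if_neg (by tauto), if_neg (by tauto)] at hkey
        have p2 := P2 i hi d
        rcases eq_or_ne d 1 with rfl | hd
        · rw [if_pos ⟨hi, rfl⟩] at hkey
          rw [if_pos rfl] at p2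
          omega
        · rw [if_neg (by tauto)] at hkey
          rw [if_neg hd] at p2
          omega
end CactusAux

/-- existence of an m-ary cactus with vertex-degree distribution
N = (n_{ij}) iff p = (n-1)/(m-1) is a nonnegative integer, ∑_j j·n_{ij} = p for
all i, and (when p ≥ 1) n_{i0} = 0 for all i. -/
theorem stmt_3 {m : ℕ} (hm : 2 ≤ m) (N : Fin m → ℕ →₀ ℕ) (n : ℕ)
    (hn : n = ∑ i, (N i).sum fun _ v => v) :
    (∃ x : PtdRaw m Unit, ∀ i j, x.ndeg i j = N i j) ↔
      ∃ p : ℕ, n = (m - 1) * p + 1 ∧ (∀ i, ((N i).sum fun j v => j * v) = p) ∧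
        (1 ≤ p → ∀ i, N i 0 = 0) := by
  constructor
  · rintro ⟨x, hx⟩
    exact CactusAux.forward N n hn x hx
  · rintro ⟨p, hp1, hp2, hp3⟩
    set B := (Finset.univ.sup fun i => (N i).support.sup id) + 1 with hB
    have hsupp : ∀ i : Fin m, (N i).support ⊆ Finset.range B := by
      intro i d hd
      rw [Finset.mem_range, hB]
      have h1 : d ≤ (N i).support.sup id := Finset.le_sup (f := id) hd
      have h2 : (N i).support.sup id ≤ Finset.univ.sup fun i => (N i).support.sup id :=
        Finset.le_sup (f := fun i => (N i).support.sup id) (Finset.mem_univ i)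
      omega
    have hb : ∀ (i : Fin m) (d : ℕ), B ≤ d → N i d = 0 := by
      intro i d hd
      by_contra h
      have := Finset.mem_range.mp (hsupp i (Finsupp.mem_support_iff.mpr h))
      omega
    have hw : ∀ i : Fin m, (∑ d ∈ Finset.range B, d * N i d) = p := by
      intro i
      rw [← hp2 i]
      exact (Finsupp.sum_of_support_subset _ (hsupp i) _ (fun d _ => by simp)).symm
    have htot : (∑ i, ∑ d ∈ Finset.range B, N i d) = (m - 1) * p + 1 := by
      rw [← hp1, hn]
      exact Finset.sum_congr rfl fun i _ =>
        (Finsupp.sum_of_support_subset (N i) (hsupp i) (fun _ v => v) (fun d _ => rfl)).symm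
    obtain ⟨x, hx⟩ := CactusAux.construct hm B p (fun i d => N i d) hb hw
      (fun h => hp3 h) htot
    exact ⟨x, hx⟩
end

section
/- Let A₁,...,A_m be formal power series in x₁,...,x_m with A_i = x_i·Φ_i(∏_{j≠i} A_j) for given one-variable power series Φ_i. Let n₁,...,n_m ≥ 1 and α₁,...,α_m ≥ 0 with n_i ≥ α_i, and suppose β := (Σn_i − Σα_i)/(m−1) is an integer; set β_i = β − n_i + α_i. Then [x₁^{n₁}⋯x_m^{n_m}] A₁^{α₁}⋯A_m^{α_m} = D·∏_i [s_i^{β_i}] Φ_i^{n_i}(s_i), where D = ∏_i (1 + β_i/n_i) − Σ_j (β_j/n_j)∏_{i≠j}(1 + β_i/n_i). -/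
/-- The composition `Φ(B) = ∑ₖ (coeff k Φ) Bᵏ` of a one-variable power series
`Φ` with a multivariate power series `B` having zero constant coefficient,
given coefficientwise (only `k ≤ |d|` contributes to the coefficient of the
monomial `d` when the constant coefficient of `B` vanishes). -/
noncomputable def phiComp {m : ℕ} (Φ : PowerSeries ℚ) (B : MvPowerSeries (Fin m) ℚ) :
    MvPowerSeries (Fin m) ℚ :=
  fun d => ∑ k ∈ Finset.range ((d.sum fun _ v => v) + 1),
    PowerSeries.coeff k Φ * MvPowerSeries.coeff d (B ^ k)

/-- coefficient extraction at an integer index (zero at negative indices). -/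
noncomputable def coeffZ (k : ℤ) (f : PowerSeries ℚ) : ℚ :=
  if 0 ≤ k then PowerSeries.coeff k.toNat f else 0

/-!
Write `uᵢ = ∏_{j≠i} Aⱼ`. Then `Aᵢ^{αᵢ} = xᵢ^{αᵢ} Φᵢ(uᵢ)^{αᵢ}`, so the claim concerns
`[x^γ] ∏ᵢ Φᵢ^{αᵢ}(uᵢ)` with `γ = n - α` of total degree `(m - 1)β`, and is proved by strong
induction on `β`. Expanding `Φᵢ^{αᵢ}(uᵢ) = ∑ₖ [s^k]Φᵢ^{αᵢ} · uᵢ^k` and using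
`∏ᵢ uᵢ^{kᵢ} = ∏ⱼ Aⱼ^{K - kⱼ}` (`K = ∑ kᵢ`) brings back the same kind of coefficient at level
`β - K`. The resulting sum over `k` factors coordinatewise because `D` is affine in each pair
`(1 + βᵢ/nᵢ, βᵢ/nᵢ)`, and each coordinate is summed by the convolutions
`∑ₜ [s^t]Φ^a · [s^{r-t}]Φ^g = [s^r]Φ^{a+g}` and
`(a + g) ∑ₜ t [s^t]Φ^a · [s^{r-t}]Φ^g = a r [s^r]Φ^{a+g}`, the latter being the coefficient
form of `(a + g) (Φ^a)' Φ^g = a (Φ^{a+g})'`.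
-/

open Finset PowerSeries

section ChottinForm

variable {ι R : Type*} [Fintype ι] [DecidableEq ι]

def chottinForm [CommRing R] (w v : ι → R) : R :=
  ∏ i, w i - ∑ j, v j * ∏ i ∈ univ.erase j, w i

lemma chottinForm_mul_right [CommRing R] (w v c : ι → R) :
    chottinForm (fun i => w i * c i) (fun i => v i * c i) = chottinForm w v * ∏ i, c i := by
  have hterm : ∀ j, v j * c j * ∏ i ∈ univ.erase j, w i * c i =
      (v j * ∏ i ∈ univ.erase j, w i) * ∏ i, c i := fun j => by
    rw [prod_mul_distrib, ← mul_prod_erase univ c (mem_univ j)]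
    ring
  rw [chottinForm, chottinForm, prod_mul_distrib, sum_congr rfl fun j _ => hterm j, ← sum_mul,
    sub_mul]

lemma sum_piFinset_chottinForm [CommRing R] {κ : Type*} (s : ι → Finset κ)
    (W V : ι → κ → R) :
    ∑ k ∈ Fintype.piFinset s, chottinForm (fun i => W i (k i)) (fun i => V i (k i)) =
      chottinForm (fun i => ∑ t ∈ s i, W i t) (fun i => ∑ t ∈ s i, V i t) := by
  unfold chottinForm
  rw [sum_sub_distrib, ← prod_univ_sum, sum_comm]
  congr 1
  refine sum_congr rfl fun j _ => ?_
  let F : ι → κ → R := fun i => if i = j then V i else W i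
  have hF : ∀ k : ι → κ, V j (k j) * ∏ i ∈ univ.erase j, W i (k i) = ∏ i, F i (k i) :=
    fun k => by
      rw [← mul_prod_erase univ _ (mem_univ j)]
      refine congrArg₂ _ (by simp [F]) (prod_congr rfl fun i hi => ?_)
      simp [F, (mem_erase.mp hi).1]
  rw [sum_congr rfl fun k _ => hF k, ← prod_univ_sum, ← mul_prod_erase univ _ (mem_univ j)]
  refine congrArg₂ _ (by simp [F]) (prod_congr rfl fun i hi => ?_)
  simp [F, (mem_erase.mp hi).1]

lemma chottinForm_one_add_of_eq_zero [CommRing R] {b : ι → R} {j : ι}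
    (hb : ∀ i, i ≠ j → b i = 0) : chottinForm (fun i => 1 + b i) b = 1 := by
  have hprod : ∏ i ∈ univ.erase j, (1 + b i) = 1 :=
    prod_eq_one fun i hi => by rw [hb i (mem_erase.mp hi).1, add_zero]
  rw [chottinForm, ← mul_prod_erase univ _ (mem_univ j), hprod,
    sum_eq_single j (fun l _ hl => by rw [hb l hl, zero_mul]) (by simp), hprod]
  ring

lemma chottinForm_eq_prod_mul [Field R] {w : ι → R} (hw : ∀ i, w i ≠ 0) (v : ι → R) :
    chottinForm w v = (∏ i, w i) * (1 - ∑ j, v j / w j) := by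
  simp only [chottinForm, mul_sub, mul_one, mul_sum]
  congr 1
  refine sum_congr rfl fun j _ => ?_
  rw [← mul_prod_erase univ w (mem_univ j)]
  field_simp [hw j]

end ChottinForm

lemma PowerSeries.coeff_X_mul_derivative {R : Type*} [CommSemiring R] (f : R⟦X⟧) (n : ℕ) :
    coeff n (X * d⁄dX R f) = n * coeff n f := by
  cases n with
  | zero => simp
  | succ n =>
    rw [coeff_succ_X_mul, coeff_derivative, mul_comm]
    push_cast
    rfl

lemma coeffZ_of_neg {k : ℤ} (hk : k < 0) (f : ℚ⟦X⟧) : coeffZ k f = 0 :=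
  if_neg (by omega)

lemma coeffZ_natCast (k : ℕ) (f : ℚ⟦X⟧) : coeffZ k f = coeff k f := by
  rw [coeffZ, if_pos (Int.natCast_nonneg k), Int.toNat_natCast]

lemma coeffZ_one {k : ℤ} (hk : k ≠ 0) : coeffZ k 1 = 0 := by
  rcases lt_or_ge k 0 with h | h
  · exact coeffZ_of_neg h _
  · rw [coeffZ, if_pos h, coeff_one, if_neg (by omega)]

lemma coeffZ_C_mul (k : ℤ) (c : ℚ) (f : ℚ⟦X⟧) : coeffZ k (C c * f) = c * coeffZ k f := by
  unfold coeffZ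
  split_ifs
  · exact coeff_C_mul _ _ _
  · ring

lemma coeffZ_X_mul_derivative (k : ℤ) (f : ℚ⟦X⟧) :
    coeffZ k (X * d⁄dX ℚ f) = k * coeffZ k f := by
  rcases lt_or_ge k 0 with hk | hk
  · rw [coeffZ_of_neg hk, coeffZ_of_neg hk, mul_zero]
  · lift k to ℕ using hk
    rw [coeffZ_natCast, coeffZ_natCast, coeff_X_mul_derivative]
    rfl

lemma coeffZ_mul {k : ℤ} {N : ℕ} (hN : k < N) (f g : ℚ⟦X⟧) :
    coeffZ k (f * g) = ∑ t ∈ range N, coeff t f * coeffZ (k - t) g := by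
  rcases lt_or_ge k 0 with hk | hk
  · rw [coeffZ_of_neg hk]
    exact (sum_eq_zero fun t _ => by rw [coeffZ_of_neg (by omega), mul_zero]).symm
  lift k to ℕ using hk
  have hkN : k + 1 ≤ N := by omega
  rw [coeffZ_natCast, coeff_mul, Nat.sum_antidiagonal_eq_sum_range_succ_mk,
    ← sum_range_add_sum_Ico _ hkN, sum_eq_zero (s := Ico _ _) fun t ht => ?_, add_zero]
  · refine sum_congr rfl fun t ht => ?_
    have htk : t ≤ k := Nat.lt_succ_iff.mp (mem_range.mp ht)
    rw [show (k : ℤ) - t = ((k - t : ℕ) : ℤ) by omega, coeffZ_natCast]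
  · rw [coeffZ_of_neg (by have := (mem_Ico.mp ht).1; omega), mul_zero]

lemma nonneg_of_coeffZ_ne_zero {k : ℤ} {f : ℚ⟦X⟧} (h : coeffZ k f ≠ 0) : 0 ≤ k := by
  by_contra hk
  exact h (coeffZ_of_neg (not_le.mp hk) f)

lemma natCast_mul_derivative_pow_mul_pow (Φ : ℚ⟦X⟧) (a g : ℕ) :
    ((a + g : ℕ) : ℚ⟦X⟧) * (d⁄dX ℚ (Φ ^ a) * Φ ^ g) = a * d⁄dX ℚ (Φ ^ (a + g)) := by
  rw [derivative_pow, derivative_pow]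
  rcases a with _ | a
  · simp
  · rw [show a + 1 + g - 1 = a + g by omega, Nat.add_sub_cancel, pow_add]
    push_cast
    ring

lemma sum_coeff_pow_mul_coeffZ_pow (Φ : ℚ⟦X⟧) (a g : ℕ) {r : ℤ} {N : ℕ} (hN : r < N) :
    ∑ t ∈ range N, coeff t (Φ ^ a) * coeffZ (r - t) (Φ ^ g) = coeffZ r (Φ ^ (a + g)) := by
  rw [pow_add, coeffZ_mul hN]

lemma sum_natCast_mul_coeff_pow_mul_coeffZ_pow (Φ : ℚ⟦X⟧) (a g : ℕ) {r : ℤ} {N : ℕ}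
    (hN : r < N) :
    ((a + g : ℕ) : ℚ) * ∑ t ∈ range N, t * coeff t (Φ ^ a) * coeffZ (r - t) (Φ ^ g) =
      a * r * coeffZ r (Φ ^ (a + g)) := by
  calc ((a + g : ℕ) : ℚ) * ∑ t ∈ range N, t * coeff t (Φ ^ a) * coeffZ (r - t) (Φ ^ g)
      = coeffZ r (C ((a + g : ℕ) : ℚ) * (X * d⁄dX ℚ (Φ ^ a) * Φ ^ g)) := by
        rw [coeffZ_C_mul, coeffZ_mul hN]
        simp only [coeff_X_mul_derivative]
    _ = coeffZ r (C (a : ℚ) * (X * d⁄dX ℚ (Φ ^ (a + g)))) := by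
        rw [map_natCast, map_natCast, mul_left_comm _ X, ← natCast_mul_derivative_pow_mul_pow]
        ring_nf
    _ = a * r * coeffZ r (Φ ^ (a + g)) := by
        rw [coeffZ_C_mul, coeffZ_X_mul_derivative, mul_assoc]

lemma sum_coeff_pow_mul_coeffZ_pow_mul_div (Φ : ℚ⟦X⟧) (a : ℕ) {g : ℕ} (hg : g ≠ 0) {r : ℤ}
    {N : ℕ} (hN : r < N) :
    ∑ t ∈ range N, coeff t (Φ ^ a) * coeffZ (r - t) (Φ ^ g) * (((r - t : ℤ) : ℚ) / g) =
      r / (a + g : ℕ) * coeffZ r (Φ ^ (a + g)) := by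
  have hP := sum_coeff_pow_mul_coeffZ_pow Φ a g hN
  have hQ := sum_natCast_mul_coeff_pow_mul_coeffZ_pow Φ a g hN
  have hsplit :
      ∑ t ∈ range N, coeff t (Φ ^ a) * coeffZ (r - t) (Φ ^ g) * (((r - t : ℤ) : ℚ) / g) =
      (r * ∑ t ∈ range N, coeff t (Φ ^ a) * coeffZ (r - t) (Φ ^ g) -
        ∑ t ∈ range N, t * coeff t (Φ ^ a) * coeffZ (r - t) (Φ ^ g)) / g := by
    rw [mul_sum, ← sum_sub_distrib, sum_div]
    refine sum_congr rfl fun t _ => ?_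
    push_cast
    ring
  rw [hsplit, hP]
  field_simp
  push_cast at hQ ⊢
  linear_combination -hQ

lemma sum_natCast_sub_eq {ι : Type*} [Fintype ι] [Nonempty ι] {γ : ι → ℕ} {β : ℕ}
    (hγ : ∑ i, γ i = (Fintype.card ι - 1) * β) : ∑ i, ((β : ℤ) - γ i) = β := by
  have hcard := Fintype.card_pos (α := ι)
  rw [sum_sub_distrib, sum_const, card_univ, nsmul_eq_mul, ← Nat.cast_sum, hγ]
  push_cast [Nat.cast_sub hcard]
  ring

section ChottinValue

variable {ι : Type*} [Fintype ι] [DecidableEq ι]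

/-- `chottinValue Φ n e` is the right-hand side `D · ∏ᵢ [s^{βᵢ}] Φᵢ^{nᵢ}` with `βᵢ = eᵢ`.
The induction also meets `nᵢ = 0`, where the division returns `0`. -/
noncomputable def chottinValue (Φ : ι → ℚ⟦X⟧) (n : ι → ℕ) (e : ι → ℤ) : ℚ :=
  chottinForm (fun i => 1 + (e i : ℚ) / n i) (fun i => (e i : ℚ) / n i) *
    ∏ i, coeffZ (e i) (Φ i ^ n i)

lemma chottinValue_eq_zero_of_neg (Φ : ι → ℚ⟦X⟧) (n : ι → ℕ) {e : ι → ℤ} {i : ι}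
    (hi : e i < 0) : chottinValue Φ n e = 0 :=
  mul_eq_zero_of_right _ (prod_eq_zero (mem_univ i) (coeffZ_of_neg hi _))

lemma chottinValue_natCast_sub_eq_zero [Nonempty ι] (Φ : ι → ℚ⟦X⟧) {γ : ι → ℕ} {β : ℕ} (hβ : β ≠ 0)
    (hγ : ∑ i, γ i = (Fintype.card ι - 1) * β) : chottinValue Φ γ (fun i => β - γ i) = 0 := by
  by_cases hT : ∏ i, coeffZ (β - γ i) (Φ i ^ γ i) = 0
  · exact mul_eq_zero_of_right _ hT
  have hγ0 : ∀ i, (γ i : ℚ) ≠ 0 := fun i h0 => by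
    rw [Nat.cast_eq_zero] at h0
    refine hT (prod_eq_zero (mem_univ i) ?_)
    rw [h0, pow_zero, Nat.cast_zero, sub_zero]
    exact coeffZ_one (by exact_mod_cast hβ)
  have hw : ∀ i, 1 + (((β : ℤ) - γ i : ℤ) : ℚ) / γ i = β / γ i := fun i => by
    field_simp [hγ0 i]
    push_cast
    ring
  have hratio : ∀ j, (((β : ℤ) - γ j : ℤ) : ℚ) / γ j / (β / γ j) = (((β : ℤ) - γ j : ℤ) : ℚ) / β :=
    fun j => div_div_div_cancel_right₀ (hγ0 j) _ _
  have hsum : ∑ j, (((β : ℤ) - γ j : ℤ) : ℚ) / β = 1 := by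
    rw [← sum_div, ← Int.cast_sum, sum_natCast_sub_eq hγ, Int.cast_natCast,
      div_self (by exact_mod_cast hβ)]
  have hw0 : ∀ i, 1 + (((β : ℤ) - γ i : ℤ) : ℚ) / γ i ≠ 0 := fun i => by
    rw [hw]
    exact div_ne_zero (by exact_mod_cast hβ) (hγ0 i)
  rw [chottinValue, chottinForm_eq_prod_mul hw0]
  simp only [hw, hratio, hsum, sub_self, mul_zero, zero_mul]

/-- Where `γᵢ = 0` the division by `γᵢ` in `chottinValue` produces `0` in place of `bᵢ`. This is
harmless: nonnegative exponents `β - γᵢ` summing to `β` vanish off the unique such `i`. -/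
lemma chottinForm_ite_eq_of_nonneg {γ : ι → ℕ} {β : ℕ}
    (hγ : ∑ i, γ i = (Fintype.card ι - 1) * β) (hnonneg : ∀ i, 0 ≤ (β : ℤ) - γ i) {b : ι → ℚ}
    (hb : ∀ i, (β : ℤ) - γ i = 0 → b i = 0) :
    chottinForm (fun i => 1 + if γ i = 0 then 0 else b i) (fun i => if γ i = 0 then 0 else b i) =
      chottinForm (fun i => 1 + b i) b := by
  by_cases h0 : ∃ i₀, γ i₀ = 0
  · obtain ⟨i₀, hi₀⟩ := h0
    have : Nonempty ι := ⟨i₀⟩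
    have hzero : ∀ i, i ≠ i₀ → (β : ℤ) - γ i = 0 := fun i hi => by
      have hle := add_le_sum (fun j _ => hnonneg j) (mem_univ i₀) (mem_univ i) hi.symm
      rw [sum_natCast_sub_eq hγ, hi₀] at hle
      have := hnonneg i
      push_cast at hle
      omega
    rw [chottinForm_one_add_of_eq_zero (j := i₀) fun i hi => by simp [hb i (hzero i hi)],
      chottinForm_one_add_of_eq_zero (j := i₀) fun i hi => hb i (hzero i hi)]
  · push Not at h0
    simp only [h0, if_false]

lemma sum_prod_coeff_mul_chottinValue (Φ : ι → ℚ⟦X⟧) (α γ : ι → ℕ) {β N : ℕ}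
    (hγ : ∑ i, γ i = (Fintype.card ι - 1) * β) (hN : β < N) :
    ∑ k ∈ Fintype.piFinset fun _ => range N,
        (∏ i, coeff (k i) (Φ i ^ α i)) * chottinValue Φ γ (fun i => β - γ i - k i) =
      chottinValue Φ (fun i => α i + γ i) (fun i => β - γ i) := by
  set c : ι → ℕ → ℚ := fun i t => coeff t (Φ i ^ α i) * coeffZ (β - γ i - t) (Φ i ^ γ i)
  set v : ι → ℕ → ℚ := fun i t => (((β : ℤ) - γ i - t : ℤ) : ℚ) / γ i
  have hterm : ∀ k : ι → ℕ,
      (∏ i, coeff (k i) (Φ i ^ α i)) * chottinValue Φ γ (fun i => β - γ i - k i) =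
        chottinForm (fun i => (1 + v i (k i)) * c i (k i)) (fun i => v i (k i) * c i (k i)) :=
    fun k => by
      rw [chottinForm_mul_right (fun i => 1 + v i (k i)) (fun i => v i (k i)) (fun i => c i (k i)),
        chottinValue, prod_mul_distrib]
      ring
  set b : ι → ℚ := fun i => if γ i = 0 then 0 else (((β : ℤ) - γ i : ℤ) : ℚ) / (α i + γ i : ℕ)
  have hV : ∀ i, ∑ t ∈ range N, v i t * c i t =
      b i * coeffZ (β - γ i) (Φ i ^ (α i + γ i)) := fun i => by
    by_cases hγi : γ i = 0
    · simp [v, b, hγi]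
    · simp only [b, hγi, if_false]
      rw [← sum_coeff_pow_mul_coeffZ_pow_mul_div _ _ hγi (by omega : (β : ℤ) - γ i < N)]
      refine sum_congr rfl fun t _ => ?_
      ring
  have hW : ∀ i, ∑ t ∈ range N, (1 + v i t) * c i t =
      (1 + b i) * coeffZ (β - γ i) (Φ i ^ (α i + γ i)) := fun i => by
    simp only [add_mul, one_mul, sum_add_distrib, hV, c,
      sum_coeff_pow_mul_coeffZ_pow _ _ _ (by omega : (β : ℤ) - γ i < N)]
  rw [sum_congr rfl fun k _ => hterm k, sum_piFinset_chottinForm (fun _ => range N)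
    (fun i t => (1 + v i t) * c i t) (fun i t => v i t * c i t)]
  simp only [hV, hW]
  rw [chottinForm_mul_right (fun i => 1 + b i) b, chottinValue]
  by_cases hT : ∏ i, coeffZ (β - γ i) (Φ i ^ (α i + γ i)) = 0
  · rw [hT, mul_zero, mul_zero]
  congr 1
  exact chottinForm_ite_eq_of_nonneg hγ
    (fun i => nonneg_of_coeffZ_ne_zero (prod_ne_zero_iff.mp hT i (mem_univ i)))
    fun i h => by simp [h]

end ChottinValue

lemma MvPowerSeries.coeff_pow_eq_zero_of_degree_lt {σ R : Type*} [CommSemiring R]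
    {B : MvPowerSeries σ R} (hB : constantCoeff B = 0) {d : σ →₀ ℕ} {k : ℕ}
    (h : d.degree < k) : coeff d (B ^ k) = 0 :=
  coeff_of_lt_order ((Nat.cast_lt.mpr h).trans_le (le_order_pow_of_constantCoeff_eq_zero k hB))

lemma MvPowerSeries.coeff_prod_eq_of_coeff_eq {σ R ι : Type*} [CommSemiring R] [DecidableEq ι]
    [DecidableEq σ] {f g : ι → MvPowerSeries σ R} {s : Finset ι} {d : σ →₀ ℕ}
    (h : ∀ i ∈ s, ∀ e ≤ d, coeff e (f i) = coeff e (g i)) :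
    coeff d (∏ i ∈ s, f i) = coeff d (∏ i ∈ s, g i) := by
  rw [coeff_prod, coeff_prod]
  refine sum_congr rfl fun l hl => prod_congr rfl fun i hi => h i hi _ ?_
  rw [← (mem_finsuppAntidiag.mp hl).1]
  exact single_le_sum (fun _ _ => zero_le) hi

section Composition

variable {m : ℕ} {B : MvPowerSeries (Fin m) ℚ}

lemma coeff_phiComp_eq_sum (hB : MvPowerSeries.constantCoeff B = 0) (Ψ : ℚ⟦X⟧)
    {d : Fin m →₀ ℕ} {N : ℕ} (hd : d.degree < N) :
    MvPowerSeries.coeff d (phiComp Ψ B) =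
      ∑ t ∈ range N, coeff t Ψ * MvPowerSeries.coeff d (B ^ t) := by
  change ∑ t ∈ range (d.degree + 1), _ = _
  refine sum_subset (fun t ht => ?_) fun t _ ht => ?_
  · rw [mem_range] at ht ⊢
    exact ht.trans_le hd
  · rw [MvPowerSeries.coeff_pow_eq_zero_of_degree_lt hB (by simpa using ht), mul_zero]

lemma phiComp_eq_subst (hB : MvPowerSeries.constantCoeff B = 0) (Ψ : ℚ⟦X⟧) :
    phiComp Ψ B = Ψ.subst B := by
  ext d
  rw [coeff_subst (HasSubst.of_constantCoeff_zero hB),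
    finsum_eq_sum_of_support_subset (s := range (d.degree + 1)) _ fun t ht => ?_]
  · exact coeff_phiComp_eq_sum hB Ψ (Nat.lt_succ_self _)
  · rw [Function.mem_support] at ht
    rw [coe_range, Set.mem_Iio]
    by_contra hdt
    exact ht (by rw [MvPowerSeries.coeff_pow_eq_zero_of_degree_lt hB (by omega), smul_zero])

lemma phiComp_pow (hB : MvPowerSeries.constantCoeff B = 0) (Ψ : ℚ⟦X⟧) (k : ℕ) :
    phiComp (Ψ ^ k) B = phiComp Ψ B ^ k := by
  rw [phiComp_eq_subst hB, phiComp_eq_subst hB, subst_pow (HasSubst.of_constantCoeff_zero hB)]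

lemma coeff_prod_phiComp {ι : Type*} [Fintype ι] [DecidableEq ι] (f : ι → ℚ⟦X⟧)
    {B : ι → MvPowerSeries (Fin m) ℚ} (hB : ∀ i, MvPowerSeries.constantCoeff (B i) = 0)
    {d : Fin m →₀ ℕ} {N : ℕ} (hd : d.degree < N) :
    MvPowerSeries.coeff d (∏ i, phiComp (f i) (B i)) =
      ∑ k ∈ Fintype.piFinset fun _ => range N,
        (∏ i, coeff (k i) (f i)) * MvPowerSeries.coeff d (∏ i, B i ^ k i) := by
  rw [MvPowerSeries.coeff_prod_eq_of_coeff_eq (g := fun i =>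
      ∑ t ∈ range N, MvPowerSeries.C (coeff t (f i)) * B i ^ t) fun i _ e he => ?_,
    prod_univ_sum, map_sum]
  · refine sum_congr rfl fun k _ => ?_
    rw [prod_mul_distrib, ← map_prod, MvPowerSeries.coeff_C_mul]
  · rw [coeff_phiComp_eq_sum (hB i) _ ((Finsupp.degree_mono he).trans_lt hd), map_sum]
    simp only [MvPowerSeries.coeff_C_mul]

end Composition

lemma prod_prod_erase_pow {ι M : Type*} [Fintype ι] [DecidableEq ι] [CommMonoid M] (f : ι → M)
    (k : ι → ℕ) :
    ∏ i, (∏ j ∈ univ.erase i, f j) ^ k i = ∏ j, f j ^ ∑ i ∈ univ.erase j, k i := by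
  calc ∏ i, (∏ j ∈ univ.erase i, f j) ^ k i = ∏ i, ∏ j ∈ univ.erase i, f j ^ k i :=
        prod_congr rfl fun i _ => (prod_pow _ _ _).symm
    _ = ∏ j, ∏ i ∈ univ.erase j, f j ^ k i := prod_comm' fun i j => by simp [ne_comm]
    _ = ∏ j, f j ^ ∑ i ∈ univ.erase j, k i := prod_congr rfl fun j _ => prod_pow_eq_pow_sum _ _ _

section System

variable {m : ℕ} {A : Fin m → MvPowerSeries (Fin m) ℚ} {Φ : Fin m → ℚ⟦X⟧}

lemma constantCoeff_prod_erase_eq_zero (hm : 2 ≤ m)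
    (hA : ∀ i, A i = MvPowerSeries.X i * phiComp (Φ i) (∏ j ∈ univ.erase i, A j)) (i : Fin m) :
    MvPowerSeries.constantCoeff (∏ j ∈ univ.erase i, A j) = 0 := by
  have : Nontrivial (Fin m) := Fin.nontrivial_iff_two_le.mpr hm
  obtain ⟨j, hj⟩ := exists_ne i
  rw [map_prod]
  refine prod_eq_zero (mem_erase.mpr ⟨hj, mem_univ j⟩) ?_
  rw [hA j, map_mul, MvPowerSeries.constantCoeff_X, zero_mul]

lemma coeff_prod_pow (hm : 2 ≤ m)
    (hA : ∀ i, A i = MvPowerSeries.X i * phiComp (Φ i) (∏ j ∈ univ.erase i, A j))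
    (a : Fin m → ℕ) (d : Fin m →₀ ℕ) :
    MvPowerSeries.coeff d (∏ i, A i ^ a i) =
      if Finsupp.equivFunOnFinite.symm a ≤ d then
        MvPowerSeries.coeff (d - Finsupp.equivFunOnFinite.symm a)
          (∏ i, phiComp (Φ i ^ a i) (∏ j ∈ univ.erase i, A j))
      else 0 := by
  have hpow : ∀ i, A i ^ a i = MvPowerSeries.X i ^ a i *
      phiComp (Φ i ^ a i) (∏ j ∈ univ.erase i, A j) := fun i => by
    rw [phiComp_pow (constantCoeff_prod_erase_eq_zero hm hA i), ← mul_pow, ← hA]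
  have hmono : ∏ i, (MvPowerSeries.X i : MvPowerSeries (Fin m) ℚ) ^ a i =
      MvPowerSeries.monomial (Finsupp.equivFunOnFinite.symm a) 1 := by
    rw [MvPowerSeries.monomial_one_eq, Finsupp.prod_fintype _ _ fun _ => pow_zero _]
    rfl
  rw [prod_congr rfl fun i _ => hpow i, prod_mul_distrib, hmono,
    MvPowerSeries.coeff_monomial_mul, one_mul]

end System

section Induction

variable {m : ℕ} {A : Fin m → MvPowerSeries (Fin m) ℚ} {Φ : Fin m → ℚ⟦X⟧}

lemma degree_equivFunOnFinite_symm_sum_erase (k : Fin m → ℕ) :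
    (Finsupp.equivFunOnFinite.symm fun j => ∑ i ∈ univ.erase j, k i).degree =
      (m - 1) * ∑ i, k i := by
  have := sum_congr rfl fun j (_ : j ∈ univ) => sum_erase_add univ k (mem_univ j)
  rw [sum_add_distrib, sum_const, card_univ, Fintype.card_fin, smul_eq_mul] at this
  rw [Finsupp.degree_eq_sum, Nat.sub_mul, one_mul]
  exact Nat.eq_sub_of_add_eq this

lemma coeff_one_eq_chottinValue (hm : 2 ≤ m) {β : ℕ} {γ : Fin m →₀ ℕ}
    (hγ : γ.degree = (m - 1) * β) :
    MvPowerSeries.coeff γ 1 = chottinValue Φ γ (fun i => β - γ i) := by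
  rw [MvPowerSeries.coeff_one]
  rcases Nat.eq_zero_or_pos β with hβ | hβ
  · have hγ0 : γ = 0 := by rwa [hβ, mul_zero, Finsupp.degree_eq_zero_iff] at hγ
    simp [hγ0, hβ, chottinValue, chottinForm, coeffZ]
  · have : NeZero m := ⟨by omega⟩
    have hγ0 : γ ≠ 0 := fun h => by
      rw [h, map_zero] at hγ
      exact Nat.mul_ne_zero (by omega) hβ.ne' hγ.symm
    rw [if_neg hγ0, chottinValue_natCast_sub_eq_zero Φ hβ.ne' (by
      rw [Fintype.card_fin, ← Finsupp.degree_eq_sum, hγ])]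

lemma exists_sub_sub_neg_of_not_le (hm : 2 ≤ m) {β : ℕ} {γ : Fin m →₀ ℕ}
    (hγ : γ.degree = (m - 1) * β) {k : Fin m → ℕ}
    (hle : ¬ (Finsupp.equivFunOnFinite.symm fun j => ∑ i ∈ univ.erase j, k i) ≤ γ) :
    ∃ i, (β : ℤ) - γ i - k i < 0 := by
  obtain ⟨j, hj⟩ : ∃ j, γ j < ∑ i ∈ univ.erase j, k i := by
    by_contra! h
    exact hle fun j => h j
  have : NeZero m := ⟨by omega⟩
  have hsum : ∑ i, ((β : ℤ) - γ i - k i) = β - ∑ i, k i := by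
    rw [sum_sub_distrib, sum_natCast_sub_eq (by
      rw [Fintype.card_fin, ← Finsupp.degree_eq_sum, hγ]), Nat.cast_sum]
  by_contra! h
  have := single_le_sum (fun i _ => h i) (mem_univ j)
  have := sum_erase_add univ k (mem_univ j)
  omega

/-- The formula at level `β`, with `γ` standing for `n - α`: `nᵢ = αᵢ + γᵢ`, `βᵢ = β - γᵢ`. -/
def ChottinIdentityAt (A : Fin m → MvPowerSeries (Fin m) ℚ) (Φ : Fin m → ℚ⟦X⟧) (β : ℕ) : Prop :=
  ∀ (α : Fin m → ℕ) (γ : Fin m →₀ ℕ), γ.degree = (m - 1) * β →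
    MvPowerSeries.coeff γ (∏ i, phiComp (Φ i ^ α i) (∏ j ∈ univ.erase i, A j)) =
      chottinValue Φ (fun i => α i + γ i) (fun i => β - γ i)

/-- `∏ᵢ uᵢ^{kᵢ} = x^σ ∏ⱼ Φⱼ^{σⱼ}(uⱼ)` with `σⱼ = K - kⱼ`: a coefficient at level `β - K`. -/
lemma coeff_prod_prod_erase_pow (hm : 2 ≤ m)
    (hA : ∀ i, A i = MvPowerSeries.X i * phiComp (Φ i) (∏ j ∈ univ.erase i, A j)) {β : ℕ}
    (IH : ∀ β' < β, ChottinIdentityAt A Φ β') {γ : Fin m →₀ ℕ} (hγ : γ.degree = (m - 1) * β)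
    (k : Fin m → ℕ) :
    MvPowerSeries.coeff γ (∏ i, (∏ j ∈ univ.erase i, A j) ^ k i) =
      chottinValue Φ γ (fun i => β - γ i - k i) := by
  rcases Nat.eq_zero_or_pos (∑ i, k i) with hK0 | hKpos
  · obtain rfl : k = 0 := funext fun i => sum_eq_zero_iff.mp hK0 i (mem_univ i)
    simp only [Pi.zero_apply, pow_zero, prod_const_one, Nat.cast_zero, sub_zero]
    exact coeff_one_eq_chottinValue hm hγ
  rw [prod_prod_erase_pow, coeff_prod_pow hm hA]
  have hdegσ := degree_equivFunOnFinite_symm_sum_erase k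
  set K := ∑ i, k i
  set σ : Fin m → ℕ := fun j => ∑ i ∈ univ.erase j, k i
  have hσ : ∀ j, σ j + k j = K := fun j => sum_erase_add _ _ (mem_univ j)
  split_ifs with hle
  swap
  · obtain ⟨i, hi⟩ := exists_sub_sub_neg_of_not_le hm hγ hle
    exact (chottinValue_eq_zero_of_neg Φ γ hi).symm
  have hKβ : K ≤ β := by
    have := Finsupp.degree_mono hle
    rw [hdegσ, hγ] at this
    exact Nat.le_of_mul_le_mul_left this (by omega)
  have hdeg : (γ - Finsupp.equivFunOnFinite.symm σ).degree = (m - 1) * (β - K) := by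
    have := congrArg Finsupp.degree (tsub_add_cancel_of_le hle)
    rw [map_add, hdegσ, hγ] at this
    rw [Nat.mul_sub, ← this, Nat.add_sub_cancel]
  rw [IH (β - K) (by omega) σ _ hdeg]
  have hσγ : ∀ i, σ i ≤ γ i := fun i => hle i
  congr 1 <;> funext i <;>
    simp only [Finsupp.coe_tsub, Pi.sub_apply, Finsupp.coe_equivFunOnFinite_symm]
  · have := hσγ i
    omega
  · have := hσ i
    push_cast [Nat.cast_sub hKβ, Nat.cast_sub (hσγ i)]
    omega

theorem chottinIdentityAt (hm : 2 ≤ m)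
    (hA : ∀ i, A i = MvPowerSeries.X i * phiComp (Φ i) (∏ j ∈ univ.erase i, A j)) (β : ℕ) :
    ChottinIdentityAt A Φ β := by
  induction β using Nat.strong_induction_on with
  | _ β IH =>
  intro α γ hγ
  have hN : (m - 1) * β < m * β + 1 :=
    Nat.lt_succ_of_le (Nat.mul_le_mul_right β (Nat.sub_le m 1))
  rw [coeff_prod_phiComp _ (constantCoeff_prod_erase_eq_zero hm hA) (hγ ▸ hN)]
  simp only [coeff_prod_prod_erase_pow hm hA IH hγ]
  exact sum_prod_coeff_mul_chottinValue Φ α γ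
    (by rw [Fintype.card_fin, ← Finsupp.degree_eq_sum, hγ]) (by nlinarith)

end Induction

theorem stmt_5_general {m : ℕ} (hm : 2 ≤ m)
    (A : Fin m → MvPowerSeries (Fin m) ℚ) (Φ : Fin m → PowerSeries ℚ)
    (hA : ∀ i, A i =
      MvPowerSeries.X i * phiComp (Φ i) (∏ j ∈ Finset.univ.erase i, A j))
    (nn aa : Fin m → ℕ) (hna : ∀ i, aa i ≤ nn i)
    (β : ℕ) (hβ : (∑ i, nn i) - (∑ i, aa i) = (m - 1) * β) :
    MvPowerSeries.coeff (Finsupp.equivFunOnFinite.symm nn) (∏ i, (A i) ^ (aa i)) =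
      ((∏ i, (1 + ((β : ℚ) - nn i + aa i) / nn i)) -
        ∑ j, (((β : ℚ) - nn j + aa j) / nn j) *
          ∏ i ∈ Finset.univ.erase j, (1 + ((β : ℚ) - nn i + aa i) / nn i)) *
      ∏ i, coeffZ ((β : ℤ) - nn i + aa i) ((Φ i) ^ (nn i)) := by
  set γ := Finsupp.equivFunOnFinite.symm nn - Finsupp.equivFunOnFinite.symm aa
  have hγ : γ.degree = (m - 1) * β := by
    rw [Finsupp.degree_eq_sum, ← hβ, ← sum_tsub_distrib _ fun i _ => hna i]
    rfl
  have hle : Finsupp.equivFunOnFinite.symm aa ≤ Finsupp.equivFunOnFinite.symm nn := fun i => hna i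
  rw [coeff_prod_pow hm hA, if_pos hle, chottinIdentityAt hm hA β aa γ hγ]
  have hn : ∀ i, aa i + γ i = nn i := fun i => Nat.add_sub_cancel' (hna i)
  have he : ∀ i, (β : ℤ) - γ i = β - nn i + aa i := fun i => by
    rw [← hn i]
    push_cast
    ring
  simp only [chottinValue, chottinForm, hn, he]
  push_cast
  rfl

/-- generalized Chottin formula: if Aᵢ = xᵢ·Φᵢ(∏_{j≠i} Aⱼ),
nᵢ ≥ 1, 0 ≤ αᵢ ≤ nᵢ, β = (∑nᵢ − ∑αᵢ)/(m−1) ∈ ℕ, βᵢ = β − nᵢ + αᵢ, then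
[x₁^{n₁}⋯x_m^{n_m}] ∏ Aᵢ^{αᵢ} = D·∏ᵢ [sᵢ^{βᵢ}] Φᵢ^{nᵢ}, where
D = ∏ᵢ(1+βᵢ/nᵢ) − ∑ⱼ(βⱼ/nⱼ)∏_{i≠j}(1+βᵢ/nᵢ). -/
theorem stmt_5 {m : ℕ} (hm : 2 ≤ m)
    (A : Fin m → MvPowerSeries (Fin m) ℚ) (Φ : Fin m → PowerSeries ℚ)
    (hA : ∀ i, A i =
      MvPowerSeries.X i * phiComp (Φ i) (∏ j ∈ Finset.univ.erase i, A j))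
    (nn aa : Fin m → ℕ) (hn : ∀ i, 1 ≤ nn i) (hna : ∀ i, aa i ≤ nn i)
    (β : ℕ) (hβ : (∑ i, nn i) - (∑ i, aa i) = (m - 1) * β) :
    MvPowerSeries.coeff (Finsupp.equivFunOnFinite.symm nn) (∏ i, (A i) ^ (aa i)) =
      ((∏ i, (1 + ((β : ℚ) - nn i + aa i) / nn i)) -
        ∑ j, (((β : ℚ) - nn j + aa j) / nn j) *
          ∏ i ∈ Finset.univ.erase j, (1 + ((β : ℚ) - nn i + aa i) / nn i)) *
      ∏ i, coeffZ ((β : ℤ) - nn i + aa i) ((Φ i) ^ (nn i)) :=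
  stmt_5_general hm A Φ hA nn aa hna β hβ
end
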